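/- arXiv:1503.00570 — 7 statements merged into one kernel-verified Lean document; each statement's English description precedes it below -/
import Mathlib

section
/- Let N be a positive integer, r > 0, and φ_1, …, φ_N ∈ (0, π). Let F : ℕ → ℝ be a function such that lim_{m→∞} F(m)/r^m = 0, and let A_1, …, A_N and B_1, …, B_N be real polynomials. Define x_m = F(m) + Σ_{n=1}^N r^m (A_n(m) cos(mφ_n) + B_n(m) sin(mφ_n)) for all m ∈ ℕ₀. If the sequence (x_m)_{m ≥ 0} is either monotone or anti-monotone, then x_m = F(m) for all m ∈ ℕ₀. -/
/-!
Write the oscillating part of `x m` as `r ^ m * G m` with `G m = Re Σ Pₙ(m) ζₙ ^ m`, where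
`ζₙ = exp (i φₙ)` is a non-real point of the unit circle. The key fact is that an exponential
polynomial `t m = Σ pᵢ(m) zᵢ ^ m` with `‖zᵢ‖ = 1`, `zᵢ ≠ 1`, which is asymptotically a
nonnegative real sequence, vanishes. For constant `pᵢ` this is a Cesàro-mean argument: the mean
of `t` tends to `0` because no `zᵢ` equals `1`, so together with one-sided control the mean of
`‖t‖` tends to `0`, while the mean of `t m * conj v ^ m` recovers the coefficient of `v`.
Dividing by `m ^ D` reduces general `pᵢ` to their top coefficients, and one inducts on `D`.

Monotonicity or anti-monotonicity of `x` makes a sign twist of `r G(m+1) - G m` asymptotically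
nonnegative, so `r G(m+1) = G m`; then `G m = G 0 / r ^ m` has constant sign, and so `G = 0`.
-/

open Filter Topology Finset Polynomial ComplexConjugate

noncomputable def cesaroMean {E : Type*} [AddCommMonoid E] [Module ℝ E] (f : ℕ → E) (M : ℕ) : E :=
  (M : ℝ)⁻¹ • ∑ m ∈ range M, f m

section CesaroMean

variable {E F : Type*}

theorem Filter.Tendsto.cesaroMean [NormedAddCommGroup E] [NormedSpace ℝ E] {f : ℕ → E} {l : E}
    (h : Tendsto f atTop (𝓝 l)) : Tendsto (cesaroMean f) atTop (𝓝 l) :=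
  h.cesaro_smul

theorem map_cesaroMean [AddCommMonoid E] [Module ℝ E] [AddCommMonoid F] [Module ℝ F]
    (L : E →ₗ[ℝ] F) (f : ℕ → E) (M : ℕ) : L (cesaroMean f M) = cesaroMean (L ∘ f) M := by
  simp [cesaroMean, map_sum]

theorem cesaroMean_sum [AddCommMonoid E] [Module ℝ E] {ι : Type*} (s : Finset ι)
    (f : ι → ℕ → E) (M : ℕ) :
    cesaroMean (fun m => ∑ i ∈ s, f i m) M = ∑ i ∈ s, cesaroMean (f i) M := by
  simp only [cesaroMean, Finset.sum_comm (s := range M), Finset.smul_sum]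

theorem cesaroMean_add [AddCommMonoid E] [Module ℝ E] (f g : ℕ → E) (M : ℕ) :
    cesaroMean (fun m => f m + g m) M = cesaroMean f M + cesaroMean g M := by
  simp only [cesaroMean, sum_add_distrib, smul_add]

theorem cesaroMean_const_mul (c : ℂ) (f : ℕ → ℂ) (M : ℕ) :
    cesaroMean (fun m => c * f m) M = c * cesaroMean f M := by
  simp only [cesaroMean, ← Finset.mul_sum, mul_smul_comm]

theorem norm_cesaroMean_le [SeminormedAddCommGroup E] [NormedSpace ℝ E] (f : ℕ → E) (M : ℕ) :
    ‖cesaroMean f M‖ ≤ cesaroMean (fun m => ‖f m‖) M := by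
  simp only [cesaroMean, norm_smul, smul_eq_mul, norm_inv, Real.norm_natCast]
  gcongr
  exact norm_sum_le _ _

theorem cesaroMean_mono {f g : ℕ → ℝ} (h : ∀ m, f m ≤ g m) (M : ℕ) :
    cesaroMean f M ≤ cesaroMean g M := by
  simp only [cesaroMean, smul_eq_mul]
  gcongr with m
  exact h m

theorem tendsto_cesaroMean_pow {z : ℂ} (hz : ‖z‖ = 1) :
    Tendsto (cesaroMean (z ^ ·)) atTop (𝓝 (if z = 1 then 1 else 0)) := by
  split_ifs with h1
  · subst h1
    simpa using (tendsto_const_nhds (x := (1 : ℂ))).cesaroMean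
  · have hgeom (M : ℕ) : ‖cesaroMean (z ^ ·) M‖ ≤ 2 / ‖z - 1‖ * (M : ℝ)⁻¹ := by
      rw [cesaroMean, geom_sum_eq h1, norm_smul, norm_div, norm_inv, Real.norm_natCast,
        mul_comm, div_mul_eq_mul_div, div_mul_eq_mul_div]
      gcongr
      calc ‖z ^ M - 1‖ ≤ ‖z ^ M‖ + ‖(1 : ℂ)‖ := norm_sub_le _ _
        _ = 2 := by rw [norm_pow, hz]; norm_num
    exact squeeze_zero_norm hgeom <| by
      simpa using (tendsto_inv_atTop_zero.comp tendsto_natCast_atTop_atTop).const_mul (2 / ‖z - 1‖)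

end CesaroMean

section ExpSum

theorem tendsto_cesaroMean_sum_mul_conj_pow {S : Finset ℂ} (hS : ∀ w ∈ S, ‖w‖ = 1) (c : ℂ → ℂ)
    {v : ℂ} (hv : ‖v‖ = 1) :
    Tendsto (cesaroMean fun m => (∑ w ∈ S, c w * w ^ m) * conj v ^ m) atTop
      (𝓝 (if v ∈ S then c v else 0)) := by
  have hv0 : v ≠ 0 := norm_ne_zero_iff.mp (by rw [hv]; exact one_ne_zero)
  have hmean : cesaroMean (fun m => (∑ w ∈ S, c w * w ^ m) * conj v ^ m)
      = fun M => ∑ w ∈ S, c w * cesaroMean ((w * v⁻¹) ^ ·) M := by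
    funext M
    simp only [Finset.sum_mul, ← Complex.inv_eq_conj hv, mul_pow, mul_assoc, cesaroMean_sum,
      cesaroMean_const_mul]
  rw [hmean, ← Finset.sum_ite_eq' S v c]
  refine tendsto_finsetSum _ fun w hw => ?_
  have := (tendsto_cesaroMean_pow (z := w * v⁻¹) (by simp [hS w hw, hv])).const_mul (c w)
  simpa [mul_inv_eq_one₀ hv0, eq_comm] using this

theorem norm_le_two_mul_norm_sub_add_re (w : ℂ) {b : ℝ} (hb : 0 ≤ b) :
    ‖w‖ ≤ 2 * ‖w - b‖ + w.re := by
  have h₁ : ‖w‖ ≤ ‖w - b‖ + b := by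
    simpa [abs_of_nonneg hb] using norm_le_norm_sub_add w (b : ℂ)
  have h₂ : -(w - b).re ≤ ‖w - b‖ := (neg_le_abs _).trans (Complex.abs_re_le_norm _)
  simp only [Complex.sub_re, Complex.ofReal_re] at h₂
  linarith

theorem tendsto_cesaroMean_norm_of_tendsto_sub_nonneg {t : ℕ → ℂ} {b : ℕ → ℝ}
    (hb : ∀ m, 0 ≤ b m) (htb : Tendsto (fun m => t m - b m) atTop (𝓝 0))
    (ht : Tendsto (cesaroMean t) atTop (𝓝 0)) :
    Tendsto (cesaroMean fun m => ‖t m‖) atTop (𝓝 0) := by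
  have hre : Tendsto (cesaroMean fun m => (t m).re) atTop (𝓝 0) :=
    ((Complex.continuous_re.tendsto 0).comp ht).congr fun M => map_cesaroMean Complex.reLm t M
  have hbound : Tendsto (cesaroMean fun m => 2 * ‖t m - b m‖ + (t m).re) atTop (𝓝 0) := by
    simpa using ((htb.norm.const_mul 2).cesaroMean.add hre).congr
      fun M => (cesaroMean_add _ _ M).symm
  exact squeeze_zero (fun M => (norm_nonneg _).trans (norm_cesaroMean_le t M))
    (cesaroMean_mono fun m => norm_le_two_mul_norm_sub_add_re (t m) (hb m)) hbound

theorem eq_zero_of_tendsto_sum_mul_pow_sub_nonneg {S : Finset ℂ} (hS : ∀ w ∈ S, ‖w‖ = 1)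
    (hS1 : 1 ∉ S) {c : ℂ → ℂ} {b : ℕ → ℝ} (hb : ∀ m, 0 ≤ b m)
    (h : Tendsto (fun m => ∑ w ∈ S, c w * w ^ m - b m) atTop (𝓝 0)) : ∀ v ∈ S, c v = 0 := by
  have hmean : Tendsto (cesaroMean fun m => ∑ w ∈ S, c w * w ^ m) atTop (𝓝 0) := by
    simpa [hS1] using tendsto_cesaroMean_sum_mul_conj_pow hS c norm_one
  have hnorm := tendsto_cesaroMean_norm_of_tendsto_sub_nonneg hb h hmean
  intro v hv
  have hlim := tendsto_cesaroMean_sum_mul_conj_pow hS c (hS v hv)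
  rw [if_pos hv] at hlim
  refine norm_le_zero_iff.mp (le_of_tendsto_of_tendsto' hlim.norm hnorm fun M => ?_)
  refine (norm_cesaroMean_le _ M).trans (le_of_eq ?_)
  simp [hS v hv]

theorem sum_mul_pow_eq_zero_of_tendsto_sub_nonneg {ι : Type*} [Fintype ι] {z : ι → ℂ}
    (hz : ∀ i, ‖z i‖ = 1) (hz1 : ∀ i, z i ≠ 1) {c : ι → ℂ} {b : ℕ → ℝ} (hb : ∀ m, 0 ≤ b m)
    (h : Tendsto (fun m => ∑ i, c i * z i ^ m - b m) atTop (𝓝 0)) (m : ℕ) :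
    ∑ i, c i * z i ^ m = 0 := by
  classical
  have hgroup (m : ℕ) : ∑ i, c i * z i ^ m
      = ∑ w ∈ univ.image z, (∑ i with z i = w, c i) * w ^ m := by
    rw [← sum_fiberwise_of_maps_to (g := z) fun i _ => mem_image_of_mem z (mem_univ i)]
    refine sum_congr rfl fun w _ => ?_
    rw [sum_mul]
    exact sum_congr rfl fun i hi => by rw [(mem_filter.mp hi).2]
  have hd := eq_zero_of_tendsto_sum_mul_pow_sub_nonneg (S := univ.image z) (by simp [hz])
    (by simp [hz1]) hb (by simpa only [hgroup] using h)
  rw [hgroup]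
  exact sum_eq_zero fun w hw => by rw [hd w hw, zero_mul]

end ExpSum

section ExpPoly

variable {ι : Type*} [Fintype ι]

noncomputable def expPoly (p : ι → ℂ[X]) (z : ι → ℂ) (m : ℕ) : ℂ :=
  ∑ i, (p i).eval (m : ℂ) * z i ^ m

theorem tendsto_eval_div_pow_of_degree_lt {q : ℂ[X]} {D : ℕ} (hq : q.degree < D) :
    Tendsto (fun m : ℕ => q.eval (m : ℂ) / (m : ℂ) ^ D) atTop (𝓝 0) := by
  have := (isLittleO_cobounded_of_degree_lt (P := q) (Q := X ^ D)
    (by rwa [degree_X_pow])).comp_tendsto (tendsto_natCast_atTop_cobounded (α := ℂ))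
  simpa using this.tendsto_div_nhds_zero

theorem tendsto_div_natCast_pow_of_tendsto_zero {f : ℕ → ℂ} (h : Tendsto f atTop (𝓝 0))
    (D : ℕ) : Tendsto (fun m => f m / (m : ℂ) ^ D) atTop (𝓝 0) := by
  refine squeeze_zero_norm' ?_ (by simpa using h.norm)
  filter_upwards [eventually_ge_atTop 1] with m hm
  rw [norm_div]
  exact div_le_self (norm_nonneg _) (by simpa using one_le_pow₀ (by exact_mod_cast hm))

theorem tendsto_expPoly_div_pow_of_degree_lt {p : ι → ℂ[X]} {z : ι → ℂ} (hz : ∀ i, ‖z i‖ = 1)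
    {D : ℕ} (hp : ∀ i, (p i).degree < D) :
    Tendsto (fun m => expPoly p z m / (m : ℂ) ^ D) atTop (𝓝 0) := by
  have h (i : ι) :
      Tendsto (fun m : ℕ => (p i).eval (m : ℂ) / (m : ℂ) ^ D * z i ^ m) atTop (𝓝 0) :=
    squeeze_zero_norm (a := fun m : ℕ => ‖(p i).eval (m : ℂ) / (m : ℂ) ^ D‖)
      (fun m => by simp [hz i])
      (by simpa using (tendsto_eval_div_pow_of_degree_lt (hp i)).norm)
  simpa [expPoly, sum_div, div_mul_eq_mul_div] using tendsto_finsetSum univ fun i _ => h i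

theorem expPoly_eq_zero_of_tendsto_sub_nonneg {z : ι → ℂ} (hz : ∀ i, ‖z i‖ = 1)
    (hz1 : ∀ i, z i ≠ 1) {b : ℕ → ℝ} (hb : ∀ m, 0 ≤ b m) {p : ι → ℂ[X]}
    (h : Tendsto (fun m => expPoly p z m - b m) atTop (𝓝 0)) (m : ℕ) : expPoly p z m = 0 := by
  obtain ⟨D, hD⟩ : ∃ D : ℕ, ∀ i, (p i).degree < D :=
    ⟨univ.sup (fun i => (p i).natDegree) + 1, fun i => degree_le_natDegree.trans_lt
      (by exact_mod_cast Nat.lt_succ_of_le (le_sup (f := fun i => (p i).natDegree) (mem_univ i)))⟩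
  induction D generalizing p with
  | zero =>
    have hp (i : ι) : p i = 0 := by simpa using hD i
    simp [expPoly, hp]
  | succ D ih =>
    set c := fun i => (p i).coeff D
    set q := fun i => p i - monomial D (c i)
    have hq (i : ι) : (q i).degree < D := by
      refine (degree_lt_iff_coeff_zero _ _).mpr fun k hk => ?_
      rcases hk.eq_or_lt with rfl | hk
      · simp [q, c]
      · simp [q, coeff_monomial, hk.ne, (degree_lt_iff_coeff_zero _ _).mp (hD i) k hk]
    have hsplit (m : ℕ) : expPoly p z m = expPoly q z m + (m : ℂ) ^ D * ∑ i, c i * z i ^ m := by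
      simp only [expPoly, q, eval_sub, eval_monomial, mul_sum, ← sum_add_distrib]
      exact sum_congr rfl fun i _ => by ring
    -- dividing by `m ^ D` isolates the top-degree coefficients
    have hlead : Tendsto (fun m => ∑ i, c i * z i ^ m - (b m / (m : ℝ) ^ D : ℝ)) atTop (𝓝 0) := by
      have hlim := (tendsto_div_natCast_pow_of_tendsto_zero h D).sub
        (tendsto_expPoly_div_pow_of_degree_lt hz hq)
      rw [sub_zero] at hlim
      refine hlim.congr' ?_
      filter_upwards [eventually_ge_atTop 1] with m hm
      have : (m : ℂ) ^ D ≠ 0 := pow_ne_zero _ (by exact_mod_cast (Nat.one_le_iff_ne_zero.mp hm))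
      rw [hsplit]
      push_cast
      field_simp
      ring
    have hc := sum_mul_pow_eq_zero_of_tendsto_sub_nonneg hz hz1
      (fun m => div_nonneg (hb m) (by positivity)) hlead
    rw [hsplit, hc, mul_zero, add_zero]
    exact ih (by simpa [hsplit, hc] using h) hq

theorem ofReal_re_expPoly (p : ι → ℂ[X]) (z : ι → ℂ) (m : ℕ) :
    ((expPoly p z m).re : ℂ) = expPoly (Sum.elim (fun i => C 2⁻¹ * p i)
      fun i => C 2⁻¹ * (p i).map (starRingEnd ℂ)) (Sum.elim z fun i => conj (z i)) m := by
  rw [Complex.re_eq_add_conj, expPoly, expPoly, Fintype.sum_sum_type, map_sum, add_div,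
    sum_div, sum_div]
  congr 1 <;> refine sum_congr rfl fun i _ => ?_
  · simp only [Sum.elim_inl, eval_mul, eval_C]
    ring
  · simp only [Sum.elim_inr, eval_mul, eval_C, map_mul, map_pow]
    rw [eval_natCast_map]
    ring

theorem re_expPoly_eq_zero_of_tendsto_sub_nonneg {z : ι → ℂ} (hz : ∀ i, ‖z i‖ = 1)
    (hz_im : ∀ i, (z i).im ≠ 0) {b : ℕ → ℝ} (hb : ∀ m, 0 ≤ b m) {p : ι → ℂ[X]}
    (h : Tendsto (fun m => (expPoly p z m).re - b m) atTop (𝓝 0)) (m : ℕ) :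
    (expPoly p z m).re = 0 := by
  have hz' : ∀ j, ‖Sum.elim z (fun i => conj (z i)) j‖ = 1 := by
    rintro (i | i) <;> simp [hz i]
  have hz1 : ∀ j, Sum.elim z (fun i => conj (z i)) j ≠ 1 := by
    rintro (i | i) h1 <;> exact hz_im i (by simpa using congrArg Complex.im h1)
  have hC := h.ofReal
  simp only [Complex.ofReal_sub, ofReal_re_expPoly, Complex.ofReal_zero] at hC
  have h' := expPoly_eq_zero_of_tendsto_sub_nonneg hz' hz1 hb hC m
  exact_mod_cast (ofReal_re_expPoly p z m).trans h'

theorem mul_pow_mul_expPoly (a w : ℂ) (p : ι → ℂ[X]) (z : ι → ℂ) (m : ℕ) :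
    a * w ^ m * expPoly p z m = expPoly (fun i => C a * p i) (fun i => w * z i) m := by
  simp only [expPoly, mul_sum, eval_mul, eval_C, mul_pow]
  exact sum_congr rfl fun i _ => by ring

theorem mul_expPoly_succ_sub (a : ℂ) (p : ι → ℂ[X]) (z : ι → ℂ) (m : ℕ) :
    a * expPoly p z (m + 1) - expPoly p z m
      = expPoly (fun i => C (a * z i) * (p i).comp (X + 1) - p i) z m := by
  simp only [expPoly, mul_sum, ← sum_sub_distrib, eval_sub, eval_mul, eval_C, eval_comp, eval_add,
    eval_X, eval_one, Nat.cast_succ, pow_succ]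
  exact sum_congr rfl fun i _ => by ring

theorem re_expPoly_eq_zero_of_sign_mul_nonneg {z : ι → ℂ} (hz : ∀ i, ‖z i‖ = 1)
    (hz_im : ∀ i, (z i).im ≠ 0) {p : ι → ℂ[X]} {Δ : ℕ → ℝ} {ε η : ℝ} (hε : ε ≠ 0)
    (hη : |η| = 1) (hΔ : ∀ m, 0 ≤ ε * η ^ m * Δ m)
    (h : Tendsto (fun m => (expPoly p z m).re - Δ m) atTop (𝓝 0)) (m : ℕ) :
    (expPoly p z m).re = 0 := by
  have hη0 : η ≠ 0 := abs_pos.mp (hη ▸ one_pos)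
  have hre (m : ℕ) : ε * η ^ m * (expPoly p z m).re
      = (expPoly (fun i => C (ε : ℂ) * p i) (fun i => η * z i) m).re := by
    rw [← mul_pow_mul_expPoly, ← Complex.ofReal_pow, ← Complex.ofReal_mul, Complex.re_ofReal_mul]
  have hlim : Tendsto (fun m => ε * η ^ m * (expPoly p z m).re - ε * η ^ m * Δ m) atTop (𝓝 0) :=
    squeeze_zero_norm (a := fun m => ‖ε‖ * ‖(expPoly p z m).re - Δ m‖)
      (fun m => le_of_eq (by rw [← mul_sub, norm_mul, norm_mul, norm_pow, Real.norm_eq_abs η, hη,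
        one_pow, mul_one]))
      (by simpa using h.norm.const_mul ‖ε‖)
  have h0 := re_expPoly_eq_zero_of_tendsto_sub_nonneg (p := fun i => C (ε : ℂ) * p i)
    (z := fun i => η * z i) (fun i => by simp [hη, hz i])
    (fun i => by simp [hη0, hz_im i]) hΔ
    (by simpa only [hre] using hlim) m
  rw [← hre] at h0
  simpa [hε, hη0] using h0

theorem sum_eval_mul_cos_add_eval_mul_sin_eq_re_expPoly (A B : ι → ℝ[X]) (φ : ι → ℝ) (m : ℕ) :
    ∑ i, ((A i).eval (m : ℝ) * Real.cos (m * φ i) + (B i).eval (m : ℝ) * Real.sin (m * φ i))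
      = (expPoly (fun i => (A i).map Complex.ofRealHom - C Complex.I * (B i).map Complex.ofRealHom)
          (fun i => Complex.exp (φ i * Complex.I)) m).re := by
  rw [expPoly, Complex.re_sum]
  refine sum_congr rfl fun i _ => ?_
  rw [eval_sub, eval_mul, eval_C, eval_natCast_map, eval_natCast_map,
    ← Complex.exp_nat_mul, ← mul_assoc, ← Complex.ofReal_natCast, ← Complex.ofReal_mul]
  simp only [Complex.ofRealHom_eq_coe, Complex.mul_re, Complex.sub_re, Complex.sub_im,
    Complex.mul_im, Complex.ofReal_re, Complex.ofReal_im, Complex.I_re, Complex.I_im,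
    Complex.exp_ofReal_mul_I_re, Complex.exp_ofReal_mul_I_im]
  ring

end ExpPoly

theorem exists_sign_mul_sub_nonneg {x : ℕ → ℝ}
    (h : Monotone x ∨ Antitone x ∨ (∀ m : ℕ, 0 ≤ (-1 : ℝ) ^ m * (x (m + 1) - x m)) ∨
      (∀ m : ℕ, (-1 : ℝ) ^ m * (x (m + 1) - x m) ≤ 0)) :
    ∃ ε η : ℝ, ε ≠ 0 ∧ |η| = 1 ∧ ∀ m, 0 ≤ ε * η ^ m * (x (m + 1) - x m) := by
  rcases h with h | h | h | h
  · exact ⟨1, 1, one_ne_zero, abs_one, fun m => by simpa using h m.le_succ⟩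
  · exact ⟨-1, 1, by norm_num, abs_one, fun m => by simpa using h m.le_succ⟩
  · exact ⟨1, -1, one_ne_zero, by simp, fun m => by simpa using h m⟩
  · exact ⟨-1, -1, by norm_num, by simp, fun m => by simpa using h m⟩

theorem tendsto_sub_sub_div_pow {F G x : ℕ → ℝ} {r : ℝ} (hr : r ≠ 0)
    (hF : Tendsto (fun m => F m / r ^ m) atTop (𝓝 0)) (hx : ∀ m, x m = F m + r ^ m * G m) :
    Tendsto (fun m => r * G (m + 1) - G m - (x (m + 1) - x m) / r ^ m) atTop (𝓝 0) := by
  have h := (((hF.comp (tendsto_add_atTop_nat 1)).const_mul r).sub hF).neg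
  rw [mul_zero, sub_zero, neg_zero] at h
  refine h.congr fun m => ?_
  simp only [Function.comp_apply, hx, pow_succ]
  field_simp
  ring

theorem eq_of_monotone_or_antimonotone_oscillation_general
    (N : ℕ) (r : ℝ) (hr : 0 < r)
    (φ : Fin N → ℝ) (hφ : ∀ n, φ n ∈ Set.Ioo (0 : ℝ) Real.pi)
    (F : ℕ → ℝ) (hF : Tendsto (fun m : ℕ => F m / r ^ m) atTop (nhds 0))
    (A B : Fin N → Polynomial ℝ) (x : ℕ → ℝ)
    (hx : ∀ m : ℕ, x m = F m + ∑ n : Fin N,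
      r ^ m * ((A n).eval (m : ℝ) * Real.cos (m * φ n) +
               (B n).eval (m : ℝ) * Real.sin (m * φ n)))
    (hmono : Monotone x ∨ Antitone x ∨
      (∀ m : ℕ, 0 ≤ (-1 : ℝ) ^ m * (x (m + 1) - x m)) ∨
      (∀ m : ℕ, (-1 : ℝ) ^ m * (x (m + 1) - x m) ≤ 0)) :
    ∀ m : ℕ, x m = F m := by
  set ζ : Fin N → ℂ := fun n => Complex.exp (φ n * Complex.I)
  set P : Fin N → ℂ[X] := fun n =>
    (A n).map Complex.ofRealHom - C Complex.I * (B n).map Complex.ofRealHom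
  set G : ℕ → ℝ := fun m => (expPoly P ζ m).re
  have hxG (m : ℕ) : x m = F m + r ^ m * G m := by
    rw [hx, ← mul_sum, sum_eval_mul_cos_add_eval_mul_sin_eq_re_expPoly]
  have hζ (n : Fin N) : ‖ζ n‖ = 1 := Complex.norm_exp_ofReal_mul_I _
  have hζ_im (n : Fin N) : (ζ n).im ≠ 0 := by
    simpa [ζ, Complex.exp_ofReal_mul_I_im]
      using (Real.sin_pos_of_pos_of_lt_pi (hφ n).1 (hφ n).2).ne'
  obtain ⟨ε, η, hε, hη, hsign⟩ := exists_sign_mul_sub_nonneg hmono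
  have hstep (m : ℕ) : r * G (m + 1) = G m := by
    have hre (m : ℕ) : r * G (m + 1) - G m
        = (expPoly (fun n => C (r * ζ n) * (P n).comp (X + 1) - P n) ζ m).re := by
      rw [← mul_expPoly_succ_sub, Complex.sub_re, Complex.re_ofReal_mul]
    refine sub_eq_zero.mp ((hre m).trans (re_expPoly_eq_zero_of_sign_mul_nonneg hζ hζ_im hε hη
      (fun m => ?_) (by simpa only [hre] using tendsto_sub_sub_div_pow hr.ne' hF hxG) m))
    rw [← mul_div_assoc]
    exact div_nonneg (hsign m) (by positivity)
  have hG (m : ℕ) : G m = G 0 / r ^ m := by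
    induction m with
    | zero => simp
    | succ m ih => rw [pow_succ, ← div_div, ← ih, ← hstep m, mul_div_cancel_left₀ _ hr.ne']
  have hG0 : G 0 = 0 := by
    by_contra h0
    refine h0 (re_expPoly_eq_zero_of_sign_mul_nonneg hζ hζ_im h0 abs_one (Δ := G)
      (fun m => ?_) (tendsto_const_nhds.congr fun m => (sub_self (G m)).symm) 0)
    rw [hG m, one_pow, mul_one, mul_div_assoc']
    exact div_nonneg (mul_self_nonneg _) (by positivity)
  intro m
  rw [hxG, hG, hG0, zero_div, mul_zero, add_zero]

/-- Lemma on eliminating oscillating terms: if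
`x_m = F(m) + Σ_{n=1}^N r^m (A_n(m) cos(mφ_n) + B_n(m) sin(mφ_n))` with `r > 0`,
`φ_n ∈ (0, π)` and `F(m)/r^m → 0`, and the sequence `(x_m)` is monotone or
anti-monotone, then `x_m = F(m)` for all `m`. -/
theorem eq_of_monotone_or_antimonotone_oscillation
    (N : ℕ) (hN : 0 < N) (r : ℝ) (hr : 0 < r)
    (φ : Fin N → ℝ) (hφ : ∀ n, φ n ∈ Set.Ioo (0 : ℝ) Real.pi)
    (F : ℕ → ℝ) (hF : Tendsto (fun m : ℕ => F m / r ^ m) atTop (nhds 0))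
    (A B : Fin N → Polynomial ℝ) (x : ℕ → ℝ)
    (hx : ∀ m : ℕ, x m = F m + ∑ n : Fin N,
      r ^ m * ((A n).eval (m : ℝ) * Real.cos (m * φ n) +
               (B n).eval (m : ℝ) * Real.sin (m * φ n)))
    (hmono : Monotone x ∨ Antitone x ∨
      (∀ m : ℕ, 0 ≤ (-1 : ℝ) ^ m * (x (m + 1) - x m)) ∨
      (∀ m : ℕ, (-1 : ℝ) ^ m * (x (m + 1) - x m) ≤ 0)) :
    ∀ m : ℕ, x m = F m :=
  eq_of_monotone_or_antimonotone_oscillation_general N r hr φ hφ F hF A B x hx hmono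
end

section
/- Let I ⊂ ℝ be a nondegenerate interval and let P be a real polynomial with P(0) ≠ 0 that factors as P = (X − 1)^{k₁}·(X − r₂)^{k₂}·Q in ℝ[X], where r₂ is a negative real number, k₁, k₂ are positive integers, and every complex root λ of Q satisfies 1 < |λ| < |r₂| (i.e., the positive root among the pair of real roots of opposite sign equals 1). Write P = Σ_{k=0}^N a_k X^k and (X − 1)·(X − r₂)^{k₂}·Q = Σ_{k=0}^M b_k X^k. Then a continuous decreasing surjection g : I → I satisfies a_N g^N(x) + … + a_1 g(x) + a_0 x = 0 for all x ∈ I if and only if it satisfies b_M g^M(x) + … + b_1 g(x) + b_0 x = 0 for all x ∈ I. -/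
/-!
Let `E` be the shift operator on two-sided real sequences. Since `g` is a bijection of `I`, every
`x ∈ I` lies on a two-sided orbit `y`, and the equation for a polynomial `A` holds along the orbit
iff `A(E) y = 0`. As `g` is decreasing, the orbit zigzags and its even and odd subsequences are
monotone in opposite directions, so `y` is bounded on one tail. Writing `P = (X - 1)^k₁ R`, the
sequence `z = R(E) y` is then bounded on that tail and `(E - 1)^k₁ z = 0`; being a polynomial in
`n`, `z` is constant, i.e. `(E - 1) R(E) y = 0`.
-/

open Polynomial Filter Asymptotics Function Set

def intShift (R : Type*) [CommSemiring R] : Module.End R (ℤ → R) :=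
  LinearMap.funLeft R R (· + 1)

section Shift

variable {R : Type*} [CommSemiring R]

theorem intShift_pow_apply (k : ℕ) (u : ℤ → R) (n : ℤ) : (intShift R ^ k) u n = u (n + k) := by
  induction k generalizing n with
  | zero => simp
  | succ k ih =>
    rw [pow_succ', Module.End.mul_apply]
    change (intShift R ^ k) u (n + 1) = _
    rw [ih]
    push_cast
    ring_nf

theorem aeval_intShift_apply (A : R[X]) (u : ℤ → R) (n : ℤ) :
    aeval (intShift R) A u n = ∑ k ∈ Finset.range (A.natDegree + 1), A.coeff k * u (n + k) := by
  simp [aeval_eq_sum_range, LinearMap.coe_sum, Finset.sum_apply, intShift_pow_apply]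

theorem aeval_intShift_apply_of_semiconj {y : ℤ → R} {g : R → R} (hy : Semiconj y (· + 1) g)
    (A : R[X]) (n : ℤ) :
    aeval (intShift R) A y n = ∑ k ∈ Finset.range (A.natDegree + 1), A.coeff k * g^[k] (y n) := by
  simp only [aeval_intShift_apply, ← (hy.iterate_right _).eq, add_right_iterate_apply, nsmul_one]

end Shift

theorem exists_semiconj_orbit {α : Type*} {s : Set α} {g : α → α} (hg : BijOn g s s) {x : α}
    (hx : x ∈ s) : ∃ y : ℤ → α, y 0 = x ∧ (∀ n, y n ∈ s) ∧ Semiconj y (· + 1) g := by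
  let e : Equiv.Perm s := hg.equiv
  refine ⟨fun n => (e ^ n) ⟨x, hx⟩, by simp, fun n => Subtype.coe_prop _, fun n => ?_⟩
  change ((e ^ (n + 1)) _ : α) = _
  rw [add_comm, zpow_one_add, Equiv.Perm.mul_apply]
  rfl

theorem forall_sum_coeff_iterate_eq_zero_iff {R : Type*} [CommSemiring R] {s : Set R}
    {g : R → R} (hg : BijOn g s s) (A : R[X]) :
    (∀ x ∈ s, ∑ k ∈ Finset.range (A.natDegree + 1), A.coeff k * g^[k] x = 0) ↔
      ∀ y : ℤ → R, (∀ n, y n ∈ s) → Semiconj y (· + 1) g → aeval (intShift R) A y = 0 := by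
  refine ⟨fun h y hys hy => funext fun n => ?_, fun h x hx => ?_⟩
  · rw [aeval_intShift_apply_of_semiconj hy]
    exact h _ (hys n)
  · obtain ⟨y, rfl, hys, hy⟩ := exists_semiconj_orbit hg hx
    rw [← aeval_intShift_apply_of_semiconj hy, h y hys hy, Pi.zero_apply]

section Bounded

variable {l : Filter ℤ} {u : ℤ → ℝ}

theorem isBigO_one_aeval_intShift (hl : ∀ k : ℕ, Tendsto (· + (k : ℤ)) l l)
    (hu : u =O[l] (fun _ => (1 : ℝ))) (A : ℝ[X]) :
    aeval (intShift ℝ) A u =O[l] (fun _ => (1 : ℝ)) := by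
  rw [show aeval (intShift ℝ) A u = _ from funext (aeval_intShift_apply A u)]
  exact IsBigO.fun_sum fun k _ => (hu.comp_tendsto (hl k)).const_mul_left _

theorem intShift_sub_one_apply_eq_zero_of_sq [l.NeBot] (hl : ∀ k : ℕ, Tendsto (· + (k : ℤ)) l l)
    (hu : u =O[l] (fun _ => (1 : ℝ))) (h : (intShift ℝ - 1) ((intShift ℝ - 1) u) = 0) :
    (intShift ℝ - 1) u = 0 := by
  set d := u 1 - u 0
  have hstep : ∀ n, u (n + 1) = u n + d := by
    have hper : Periodic (fun n => u (n + 1) - u n) 1 := fun n => by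
      simpa [intShift, sub_eq_zero] using congrFun h n
    intro n
    have := hper.int_mul_eq n
    simp only [Int.cast_id, mul_one, zero_add] at this
    linarith
  have hiter : ∀ n (k : ℕ), u (n + k) = u n + k * d := by
    intro n k
    induction k with
    | zero => simp
    | succ k ih => push_cast; rw [← add_assoc, hstep, ih]; ring
  obtain ⟨C, hC⟩ := ((isBigO_one_iff ℝ).1 hu).eventually_le
  have hbound : ∀ k : ℕ, k * |d| ≤ 2 * C := by
    intro k
    obtain ⟨n, hn, hnk⟩ := (hC.and ((hl k).eventually hC)).exists
    rw [← Nat.abs_cast k, ← abs_mul, show (k : ℝ) * d = u (n + k) - u n by linarith [hiter n k]]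
    exact (abs_sub _ _).trans (by simp only [Real.norm_eq_abs] at hn hnk; linarith)
  have hd : d = 0 := by
    by_contra hd
    obtain ⟨k, hk⟩ := exists_nat_gt (2 * C / |d|)
    have := (div_lt_iff₀ (abs_pos.2 hd)).1 hk
    linarith [hbound k]
  ext n
  simp [intShift, hstep, hd]

theorem intShift_sub_one_apply_eq_zero_of_pow [l.NeBot] (hl : ∀ k : ℕ, Tendsto (· + (k : ℤ)) l l)
    (hu : u =O[l] (fun _ => (1 : ℝ))) {m : ℕ} (h : ((intShift ℝ - 1) ^ m) u = 0) :
    (intShift ℝ - 1) u = 0 := by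
  induction m generalizing u with
  | zero =>
    rw [pow_zero, Module.End.one_apply] at h
    rw [h, map_zero]
  | succ m ih =>
    refine intShift_sub_one_apply_eq_zero_of_sq hl hu (ih ?_ ?_)
    · have := isBigO_one_aeval_intShift hl hu (X - 1)
      rwa [map_sub, aeval_X, map_one] at this
    · rwa [pow_succ, Module.End.mul_apply] at h

theorem aeval_intShift_sub_one_pow_mul_eq_zero_iff [l.NeBot]
    (hl : ∀ k : ℕ, Tendsto (· + (k : ℤ)) l l) (hu : u =O[l] (fun _ => (1 : ℝ))) {k : ℕ}
    (hk : 0 < k) (A : ℝ[X]) :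
    aeval (intShift ℝ) ((X - 1) ^ k * A) u = 0 ↔ aeval (intShift ℝ) ((X - 1) * A) u = 0 := by
  simp only [map_mul, map_pow, map_sub, aeval_X, map_one, Module.End.mul_apply]
  refine ⟨intShift_sub_one_apply_eq_zero_of_pow hl (isBigO_one_aeval_intShift hl hu A),
    fun h => ?_⟩
  obtain ⟨j, rfl⟩ := Nat.exists_eq_add_one_of_ne_zero hk.ne'
  rw [pow_succ, Module.End.mul_apply, h, map_zero]

end Bounded

theorem Int.iff_zero_of_forall_iff_add_one {p : ℤ → Prop} (h : ∀ n, p n ↔ p (n + 1)) (n : ℤ) :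
    p n ↔ p 0 := by
  induction n using Int.induction_on with
  | zero => rfl
  | succ n ih => rw [← h, ih]
  | pred n ih => rw [← ih, h, sub_add_cancel]

theorem eventually_mem_uIcc_of_le_iff_le {α : Type*} [LinearOrder α] {y : ℤ → α}
    (hy : ∀ m n, y (m + 1) ≤ y (n + 1) ↔ y n ≤ y m) :
    (∀ᶠ n in atTop, y n ∈ uIcc (y 0) (y 1)) ∨ ∀ᶠ n in atBot, y n ∈ uIcc (y 0) (y 1) := by
  wlog h01 : y 0 ≤ y 1 generalizing α
  · simpa [uIcc_comm] using this (α := αᵒᵈ) (y := OrderDual.toDual ∘ y) (fun m n => hy n m)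
      (le_of_not_ge h01)
  have h2 : ∀ a b, y (a + 2) ≤ y (b + 2) ↔ y a ≤ y b := fun a b => by
    rw [show a + 2 = a + 1 + 1 by ring, show b + 2 = b + 1 + 1 by ring, hy, hy]
  have h2n : ∀ a b n, y (2 * n + a) ≤ y (2 * n + b) ↔ y a ≤ y b := fun a b n =>
    (Int.iff_zero_of_forall_iff_add_one (p := fun n => y (2 * n + a) ≤ y (2 * n + b))
      (fun n => by rw [← h2]; ring_nf) n).trans (by simp)
  have hmem : ∀ n, y 0 ≤ y (2 * n) → y (2 * n + 1) ≤ y 1 →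
      ∀ k, (k = 2 * n ∨ k = 2 * n + 1) → y k ∈ Icc (y 0) (y 1) := by
    have hzig : ∀ n, y (2 * n) ≤ y (2 * n + 1) := fun n => by simpa using (h2n 0 1 n).2 h01
    rintro n h0 h1 k (rfl | rfl)
    exacts [⟨h0, (hzig n).trans h1⟩, ⟨h0.trans (hzig n), h1⟩]
  rw [uIcc_of_le h01]
  rcases le_total (y 0) (y 2) with h02 | h20
  · have hev : Monotone fun n => y (2 * n) := monotone_int_of_le_succ fun n => by
      simpa [mul_add] using (h2n 0 2 n).2 h02
    have hod : Antitone fun n => y (2 * n + 1) := fun a b hab => (hy _ _).2 (hev hab)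
    refine Or.inl ?_
    filter_upwards [eventually_ge_atTop 0] with k hk
    obtain ⟨n, hn⟩ := Int.even_or_odd' k
    have hn0 : 0 ≤ n := by omega
    exact hmem n (by simpa using hev hn0) (by simpa using hod hn0) k hn
  · have hev : Antitone fun n => y (2 * n) := antitone_int_of_succ_le fun n => by
      simpa [mul_add] using (h2n 2 0 n).2 h20
    have hod : Monotone fun n => y (2 * n + 1) := fun a b hab => (hy _ _).2 (hev hab)
    refine Or.inr ?_
    filter_upwards [eventually_le_atBot 0] with k hk
    obtain ⟨n, hn⟩ := Int.even_or_odd' k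
    have hn0 : n ≤ 0 := by omega
    exact hmem n (by simpa using hev hn0) (by simpa using hod hn0) k hn

theorem isBigO_one_atTop_or_atBot_of_semiconj {s : Set ℝ} {g : ℝ → ℝ} (hg : StrictAntiOn g s)
    {y : ℤ → ℝ} (hys : ∀ n, y n ∈ s) (hy : Semiconj y (· + 1) g) :
    y =O[atTop] (fun _ => (1 : ℝ)) ∨ y =O[atBot] (fun _ => (1 : ℝ)) := by
  have hbdd {l : Filter ℤ} (h : ∀ᶠ n in l, y n ∈ uIcc (y 0) (y 1)) :
      y =O[l] (fun _ => (1 : ℝ)) :=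
    (isBigO_one_iff ℝ).2 <| isBoundedUnder_of_eventually_le <|
      h.mono fun n hn => (abs_le_max_abs_abs hn.1 hn.2).trans_eq' (Real.norm_eq_abs _)
  refine (eventually_mem_uIcc_of_le_iff_le fun m n => ?_).imp hbdd hbdd
  rw [hy.eq, hy.eq]
  exact hg.le_iff_ge (hys m) (hys n)

theorem reduce_order_opposite_sign_roots_decreasing_root_one_general
    (I : Set ℝ)
    (P Q : Polynomial ℝ) (r₂ : ℝ) (k₁ k₂ : ℕ) (hk₁ : 0 < k₁)
    (hfac : P = (X - 1) ^ k₁ * (X - C r₂) ^ k₂ * Q)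
    (g : ℝ → ℝ) (hg : Set.MapsTo g I I)
    (hgm : StrictAntiOn g I) (hgs : Set.SurjOn g I I) :
    (∀ x ∈ I, ∑ k ∈ Finset.range (P.natDegree + 1), P.coeff k * g^[k] x = 0) ↔
      (∀ x ∈ I, ∑ k ∈ Finset.range (((X - 1) * (X - C r₂) ^ k₂ * Q).natDegree + 1),
        ((X - 1) * (X - C r₂) ^ k₂ * Q).coeff k * g^[k] x = 0) := by
  have hbij : BijOn g I I := ⟨hg, hgm.injOn, hgs⟩
  rw [forall_sum_coeff_iterate_eq_zero_iff hbij, forall_sum_coeff_iterate_eq_zero_iff hbij,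
    hfac, mul_assoc, mul_assoc]
  refine forall_congr' fun y => imp_congr_right fun hyI => imp_congr_right fun hy => ?_
  rcases isBigO_one_atTop_or_atBot_of_semiconj hgm hyI hy with hb | hb
  · exact aeval_intShift_sub_one_pow_mul_eq_zero_iff
      (fun k => tendsto_atTop_add_const_right _ _ tendsto_id) hb hk₁ _
  · exact aeval_intShift_sub_one_pow_mul_eq_zero_iff
      (fun k => tendsto_atBot_add_const_right _ _ tendsto_id) hb hk₁ _

/-- Eliminating roots for decreasing solutions when the positive extreme root equals `1`:
with `P = (X − 1)^{k₁}·(X − r₂)^{k₂}·Q`, `r₂ < 0`, and every complex root `λ` of `Q`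
satisfying `1 < |λ| < |r₂|`, a continuous decreasing surjection `g : I → I` satisfies the
equation for `P` iff it satisfies the equation for `(X − 1)·(X − r₂)^{k₂}·Q`. -/
theorem reduce_order_opposite_sign_roots_decreasing_root_one
    (I : Set ℝ) (hI : I.OrdConnected) (hne : ∃ a ∈ I, ∃ b ∈ I, a ≠ b)
    (P Q : Polynomial ℝ) (r₂ : ℝ) (k₁ k₂ : ℕ) (hk₁ : 0 < k₁) (hk₂ : 0 < k₂)
    (hP0 : P.eval 0 ≠ 0) (hr₂ : r₂ < 0)
    (hfac : P = (X - 1) ^ k₁ * (X - C r₂) ^ k₂ * Q)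
    (hmod : ∀ z : ℂ, aeval z Q = 0 →
      1 < ‖z‖ ∧ ‖z‖ < |r₂|)
    (g : ℝ → ℝ) (hg : Set.MapsTo g I I) (hgc : ContinuousOn g I)
    (hgm : StrictAntiOn g I) (hgs : Set.SurjOn g I I) :
    (∀ x ∈ I, ∑ k ∈ Finset.range (P.natDegree + 1), P.coeff k * g^[k] x = 0) ↔
      (∀ x ∈ I, ∑ k ∈ Finset.range (((X - 1) * (X - C r₂) ^ k₂ * Q).natDegree + 1),
        ((X - 1) * (X - C r₂) ^ k₂ * Q).coeff k * g^[k] x = 0) :=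
  reduce_order_opposite_sign_roots_decreasing_root_one_general I P Q r₂ k₁ k₂ hk₁ hfac g hg hgm hgs
end

section
/- Let J ⊂ (0, ∞) be a nondegenerate interval and let f : J → J be a continuous function satisfying f³(x) = [f(x)]³ / x² for every x ∈ J, where f³ denotes the third iterate of f. Then: (i) if J is bounded and 0 ∉ cl J, then f(x) = x for every x ∈ J; (ii) if J is bounded and 0 ∈ cl J, then there exists c ∈ (0, 1] such that f(x) = c·x for every x ∈ J; (iii) if J is unbounded and 0 ∉ cl J, then there exists c ∈ [1, ∞) such that f(x) = c·x for every x ∈ J; (iv) if J = (0, ∞), then there exists c ∈ (0, ∞) such that either f(x) = c·x for every x ∈ (0, ∞) or f(x) = c / x² for every x ∈ (0, ∞). -/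
/-!
Along an orbit `xₙ = fⁿ x` the equation reads `log xₙ₊₃ = 3 log xₙ₊₁ - 2 log xₙ`, a linear
recurrence with characteristic polynomial `(X - 1)² (X + 2)`; hence
`log xₙ = A + B n + C (-2)ⁿ`, where `C = 0` exactly when `f (f x) · x = (f x)²`.
Since `f³ x = (f x)³ / x²` makes `f` injective, `f` is strictly monotone.

If `f` is increasing, every orbit is monotone, so it cannot oscillate like `C (-2)ⁿ`: `C = 0`
and `fⁿ x = (f x / x)ⁿ x`. The ratio `f x / x` is then monotone in `x`, and an orbit with ratio
`≠ 1` runs through all of `J` on one side of its starting point, pinning the ratio there; by the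
intermediate value theorem the ratio is constant. Boundedness of `J` and `0 ∉ cl J` bound it.

If `f` is decreasing, some orbit has `C ≠ 0`, so `J` is unbounded and accumulates at `0`.
On `(0, ∞)` the map `f` is onto and has a fixed point `p`; its backward orbits satisfy the
recurrence with roots `1, 1, -1/2`, so `log x₋ₙ = A + B n + C (-1/2)ⁿ`. They alternate around
`p`, which forces `B = 0`; so they converge to `exp A`, which must be `p`, and comparing
`x₀ = f y` with `x₋₁ = y` gives `f y = p³ / y²`.
-/

open Set Filter Topology Real

theorem exists_eq_add_mul_add_mul_pow {r : ℝ} (hr : r ≠ 1) {t : ℕ → ℝ}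
    (ht : ∀ n, t (n + 3) = (2 + r) * t (n + 2) - (1 + 2 * r) * t (n + 1) + r * t n) :
    ∃ A B C : ℝ, ∀ n : ℕ, t n = A + B * n + C * r ^ n := by
  set C := (t 2 - 2 * t 1 + t 0) / (r - 1) ^ 2
  have hC : C * (r - 1) ^ 2 = t 2 - 2 * t 1 + t 0 :=
    div_mul_cancel₀ _ (pow_ne_zero _ (sub_ne_zero.mpr hr))
  refine ⟨t 0 - C, t 1 - t 0 - C * (r - 1), C, fun n => ?_⟩
  induction n using Nat.strong_induction_on with
  | _ n ih =>
    match n with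
    | 0 => simp
    | 1 => push_cast; ring
    | 2 => push_cast; linear_combination -hC
    | n + 3 =>
      rw [ht, ih n (by omega), ih (n + 1) (by omega), ih (n + 2) (by omega)]
      push_cast; ring

theorem tendsto_add_mul_add_mul_pow_atTop {r : ℝ} (hr : 1 < r) (a b : ℝ) {c : ℝ} (hc : 0 < c) :
    Tendsto (fun n : ℕ => a + b * n + c * r ^ n) atTop atTop := by
  have h0 : Tendsto (fun n : ℕ => (a + b * n) / r ^ n + c) atTop (𝓝 c) := by
    have h1 := (tendsto_pow_const_div_const_pow_of_one_lt 0 hr).const_mul a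
    have h2 := (tendsto_pow_const_div_const_pow_of_one_lt 1 hr).const_mul b
    convert (h1.add h2).add_const c using 1
    · ext n; simp only [pow_zero, pow_one]; ring
    · simp
  refine ((tendsto_pow_atTop_atTop_of_one_lt hr).atTop_mul_pos hc h0).congr fun n => ?_
  have : r ^ n ≠ 0 := by positivity
  field_simp

theorem exists_lt_add_mul_add_mul_neg_two_pow {C : ℝ} (hC : C ≠ 0) (A B K : ℝ) :
    ∃ n : ℕ, K < A + B * n + C * (-2) ^ n := by
  have h4 : (1 : ℝ) < 4 := by norm_num
  have h2m (m : ℕ) : (-2 : ℝ) ^ (2 * m) = 4 ^ m := by rw [pow_mul]; norm_num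
  rcases hC.lt_or_gt with hC | hC
  · obtain ⟨m, hm⟩ := ((tendsto_add_mul_add_mul_pow_atTop h4 (A + B) (2 * B)
      (by linarith : 0 < -2 * C)).eventually_gt_atTop K).exists
    refine ⟨2 * m + 1, ?_⟩
    rw [pow_succ, h2m]
    push_cast
    linarith
  · obtain ⟨m, hm⟩ := ((tendsto_add_mul_add_mul_pow_atTop h4 A (2 * B) hC).eventually_gt_atTop
      K).exists
    refine ⟨2 * m, ?_⟩
    rw [h2m]
    push_cast
    linarith

theorem eq_zero_of_sub_mul_sub_nonpos {u : ℕ → ℝ} {A B C r : ℝ} (hr : |r| < 1)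
    (hu : ∀ n, u n = A + B * n + C * r ^ n)
    (hzig : ∀ n, (u (n + 1) - u n) * (u (n + 2) - u (n + 1)) ≤ 0) : B = 0 := by
  have he : Tendsto (fun n => u (n + 1) - u n) atTop (𝓝 B) := by
    have := ((tendsto_pow_atTop_nhds_zero_of_abs_lt_one hr).const_mul (C * (r - 1))).const_add B
    rw [mul_zero, add_zero] at this
    refine this.congr fun n => ?_
    rw [hu, hu]
    push_cast
    ring
  have hBB : B * B ≤ 0 := le_of_tendsto' (he.mul (he.comp (tendsto_add_atTop_nat 1))) hzig
  exact mul_self_eq_zero.mp (le_antisymm hBB (mul_self_nonneg B))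

theorem le_of_forall_pow_mul_le {a b x y : ℝ} (hb : 0 < b) (hx : 0 < x)
    (h : ∀ n : ℕ, a ^ n * x ≤ b ^ n * y) : a ≤ b := by
  by_contra! hba
  obtain ⟨n, hn⟩ := pow_unbounded_of_one_lt (y / x) ((one_lt_div hb).mpr hba)
  rw [div_pow, div_lt_div_iff₀ hx (pow_pos hb n)] at hn
  linarith [h n]

theorem log_pow_three_div_sq {a b : ℝ} (ha : a ≠ 0) (hb : b ≠ 0) :
    log (a ^ 3 / b ^ 2) = 3 * log a - 2 * log b := by
  rw [log_div (pow_ne_zero _ ha) (pow_ne_zero _ hb), log_pow, log_pow]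
  push_cast
  ring

theorem ContinuousOn.strictMonoOn_of_injOn_ordConnected {J : Set ℝ} {f : ℝ → ℝ}
    (hJ : J.OrdConnected) (hfc : ContinuousOn f J) (hinj : InjOn f J) :
    StrictMonoOn f J ∨ StrictAntiOn f J := by
  rcases J.eq_empty_or_nonempty with rfl | ⟨x, hx⟩
  · exact Or.inl fun _ h => h.elim
  have : Inhabited J := ⟨⟨x, hx⟩⟩
  exact (Continuous.strictMono_of_inj hfc.domRestrict hinj.injective).imp
    strictMonoOn_iff_strictMono.mpr strictAntiOn_iff_strictAnti.mpr

theorem MonotoneOn.iterate {α : Type*} [Preorder α] {s : Set α} {f : α → α}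
    (hmono : MonotoneOn f s) (hf : MapsTo f s s) (n : ℕ) : MonotoneOn f^[n] s := by
  induction n with
  | zero => exact monotoneOn_id
  | succ n ih => rw [Function.iterate_succ']; exact hmono.comp ih (hf.iterate n)

theorem MonotoneOn.le_iterate_of_le {α : Type*} [Preorder α] {s : Set α} {f : α → α}
    (hmono : MonotoneOn f s) (hf : MapsTo f s s) {x : α} (hx : x ∈ s) (h : x ≤ f x) (n : ℕ) :
    x ≤ f^[n] x := by
  induction n with
  | zero => exact le_rfl
  | succ n ih =>
    rw [Function.iterate_succ_apply]
    exact ih.trans ((hmono.iterate hf n) hx (hf hx) h)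

theorem MonotoneOn.iterate_le_of_le {α : Type*} [Preorder α] {s : Set α} {f : α → α}
    (hmono : MonotoneOn f s) (hf : MapsTo f s s) {x : α} (hx : x ∈ s) (h : f x ≤ x) (n : ℕ) :
    f^[n] x ≤ x := by
  induction n with
  | zero => exact le_rfl
  | succ n ih =>
    rw [Function.iterate_succ_apply]
    exact ((hmono.iterate hf n) (hf hx) hx h).trans ih

theorem AntitoneOn.exists_isFixedPt {J : Set ℝ} {f : ℝ → ℝ} (hJ : J.OrdConnected)
    (hf : MapsTo f J J) (hfc : ContinuousOn f J) (hanti : AntitoneOn f J) {x : ℝ} (hx : x ∈ J) :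
    ∃ p ∈ J, f p = p := by
  have hsub : uIcc x (f x) ⊆ J := hJ.uIcc_subset hx (hf hx)
  have hzero : (0 : ℝ) ∈ uIcc (f x - x) (f (f x) - f x) := by
    rcases le_total x (f x) with h | h
    · have := hanti hx (hf hx) h
      exact mem_uIcc.mpr (Or.inr ⟨by linarith, by linarith⟩)
    · have := hanti (hf hx) hx h
      exact mem_uIcc.mpr (Or.inl ⟨by linarith, by linarith⟩)
  obtain ⟨p, hp, hfp⟩ :=
    intermediate_value_uIcc ((hfc.mono hsub).sub continuousOn_id) hzero
  exact ⟨p, hsub hp, sub_eq_zero.mp hfp⟩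

theorem Set.SurjOn.exists_backward_orbit {α : Type*} {s : Set α} {f : α → α}
    (hf : SurjOn f s s) {x : α} (hx : x ∈ s) :
    ∃ v : ℕ → α, v 0 = x ∧ ∀ n, v n ∈ s ∧ f (v (n + 1)) = v n := by
  have hpre : ∀ y ∈ s, ∃ z ∈ s, f z = y := fun y hy => hf hy
  choose! g hgs hfg using hpre
  have hg : MapsTo g s s := hgs
  refine ⟨fun n => g^[n] x, rfl, fun n => ⟨hg.iterate n hx, ?_⟩⟩
  simp only [Function.iterate_succ_apply']
  exact hfg _ (hg.iterate n hx)

-- orbits alternate around the fixed point `p`, so `b` is an extremum of the segment `c, b, f b`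
theorem StrictAntiOn.zigzag {α : Type*} [LinearOrder α] {s : Set α}
    {f : α → α} (hanti : StrictAntiOn f s) {p b c : α} (hp : p ∈ s) (hfp : f p = p)
    (hb : b ∈ s) (hc : c ∈ s) (hcb : f c = b) :
    (f b ≤ b ∧ c ≤ b) ∨ (b ≤ f b ∧ b ≤ c) := by
  rcases le_total b p with h | h
  · refine Or.inr ⟨?_, ?_⟩
    · calc b ≤ p := h
        _ = f p := hfp.symm
        _ ≤ f b := hanti.antitoneOn hb hp h
    · calc b ≤ p := h
        _ ≤ c := (hanti.le_iff_ge hc hp).mp (by rw [hcb, hfp]; exact h)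
  · refine Or.inl ⟨?_, ?_⟩
    · calc f b ≤ f p := hanti.antitoneOn hp hb h
        _ = p := hfp
        _ ≤ b := h
    · calc c ≤ p := (hanti.le_iff_ge hp hc).mp (by rw [hcb, hfp]; exact h)
        _ ≤ b := h

theorem StrictAntiOn.eq_of_apply_eq_self {α : Type*} [LinearOrder α] {s : Set α} {f : α → α}
    (hanti : StrictAntiOn f s) {p q : α} (hp : p ∈ s) (hq : q ∈ s) (hfp : f p = p)
    (hfq : f q = q) : p = q := by
  rcases lt_trichotomy p q with h | h | h
  · have := hanti hp hq h
    rw [hfp, hfq] at this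
    exact absurd h this.not_gt
  · exact h
  · have := hanti hq hp h
    rw [hfp, hfq] at this
    exact absurd h this.not_gt

section

variable {J : Set ℝ} {f : ℝ → ℝ}

theorem injOn_of_iterate_three_eq (hJ : J ⊆ Ioi 0) (hf : MapsTo f J J)
    (heq : ∀ x ∈ J, f^[3] x = f x ^ 3 / x ^ 2) : InjOn f J := by
  intro a ha b hb hab
  have h3 : f^[3] a = f^[3] b := by simp only [Function.iterate_succ_apply, hab]
  rw [heq a ha, heq b hb, hab, div_eq_div_iff (pow_pos (hJ ha) 2).ne' (pow_pos (hJ hb) 2).ne']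
    at h3
  have hsq := mul_left_cancel₀ (pow_ne_zero 3 (hJ (hf hb)).ne') h3
  exact (pow_left_inj₀ (hJ ha).le (hJ hb).le two_ne_zero).mp hsq.symm

theorem log_iterate_three (hJ : J ⊆ Ioi 0) (hf : MapsTo f J J)
    (heq : ∀ x ∈ J, f^[3] x = f x ^ 3 / x ^ 2) {x : ℝ} (hx : x ∈ J) :
    log (f^[3] x) = 3 * log (f x) - 2 * log x := by
  rw [heq x hx, log_pow_three_div_sq (hJ (hf hx)).ne' (hJ hx).ne']

theorem log_iterate_add_three (hJ : J ⊆ Ioi 0) (hf : MapsTo f J J)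
    (heq : ∀ x ∈ J, f^[3] x = f x ^ 3 / x ^ 2) {x : ℝ} (hx : x ∈ J) (n : ℕ) :
    log (f^[n + 3] x) = 3 * log (f^[n + 1] x) - 2 * log (f^[n] x) := by
  rw [add_comm n, Function.iterate_add_apply, log_iterate_three hJ hf heq (hf.iterate n hx),
    ← Function.iterate_succ_apply' f n]

theorem iterate_unbounded_of_mul_ne_sq (hJ : J ⊆ Ioi 0) (hf : MapsTo f J J)
    (heq : ∀ x ∈ J, f^[3] x = f x ^ 3 / x ^ 2) {x : ℝ} (hx : x ∈ J)
    (hD : f (f x) * x ≠ f x ^ 2) :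
    (∀ M, ∃ n, M < f^[n] x) ∧ ∀ ε > 0, ∃ n, f^[n] x < ε := by
  have hpos (n : ℕ) : 0 < f^[n] x := hJ (hf.iterate n hx)
  obtain ⟨A, B, C, ht⟩ := exists_eq_add_mul_add_mul_pow (r := -2) (by norm_num)
    (t := fun n => log (f^[n] x)) fun n => by
      simp only [log_iterate_add_three hJ hf heq hx]; ring
  have hC : C ≠ 0 := by
    rintro rfl
    have key : log (f^[2] x) + log (f^[0] x) = log (f^[1] x ^ 2) := by
      simp only [log_pow, ht]; push_cast; ring
    rw [← log_mul (hpos 2).ne' (hpos 0).ne'] at key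
    exact hD (log_injOn_pos (mul_pos (hpos 2) (hpos 0)) (pow_pos (hpos 1) 2) key)
  refine ⟨fun M => ?_, fun ε hε => ?_⟩
  · obtain ⟨n, hn⟩ := exists_lt_add_mul_add_mul_neg_two_pow hC A B M
    refine ⟨n, ?_⟩
    calc M < M + 1 := lt_add_one M
      _ ≤ exp M := add_one_le_exp M
      _ < exp (log (f^[n] x)) := exp_lt_exp.mpr (by rw [ht n]; exact hn)
      _ = f^[n] x := exp_log (hpos n)
  · obtain ⟨n, hn⟩ :=
      exists_lt_add_mul_add_mul_neg_two_pow (neg_ne_zero.mpr hC) (-A) (-B) (-log ε)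
    refine ⟨n, ?_⟩
    rw [← log_lt_log_iff (hpos n) hε, ht n]
    linarith

theorem mul_eq_sq_of_monotoneOn (hJ : J ⊆ Ioi 0) (hf : MapsTo f J J)
    (heq : ∀ x ∈ J, f^[3] x = f x ^ 3 / x ^ 2) (hmono : MonotoneOn f J) {x : ℝ} (hx : x ∈ J) :
    f (f x) * x = f x ^ 2 := by
  by_contra hD
  obtain ⟨hup, hdown⟩ := iterate_unbounded_of_mul_ne_sq hJ hf heq hx hD
  rcases le_total x (f x) with h | h
  · obtain ⟨n, hn⟩ := hdown x (hJ hx)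
    exact hn.not_ge (hmono.le_iterate_of_le hf hx h n)
  · obtain ⟨n, hn⟩ := hup x
    exact hn.not_ge (hmono.iterate_le_of_le hf hx h n)

theorem iterate_eq_div_pow_mul (hJ : J ⊆ Ioi 0) (hf : MapsTo f J J)
    (hsq : ∀ x ∈ J, f (f x) * x = f x ^ 2) (n : ℕ) :
    ∀ x ∈ J, f^[n] x = (f x / x) ^ n * x := by
  induction n with
  | zero => simp
  | succ n ih =>
    intro x hx
    have hx0 : x ≠ 0 := (hJ hx).ne'
    have hfx0 : f x ≠ 0 := (hJ (hf hx)).ne'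
    have hratio : f (f x) / f x = f x / x := by
      rw [div_eq_div_iff hfx0 hx0]
      linear_combination hsq x hx
    rw [Function.iterate_succ_apply, ih (f x) (hf hx), hratio, pow_succ]
    field_simp

theorem div_iterate_eq (hJ : J ⊆ Ioi 0) (hf : MapsTo f J J)
    (hsq : ∀ x ∈ J, f (f x) * x = f x ^ 2) (n : ℕ) {x : ℝ} (hx : x ∈ J) :
    f (f^[n] x) / f^[n] x = f x / x := by
  have hx0 : x ≠ 0 := (hJ hx).ne'
  have hfx0 : f x ≠ 0 := (hJ (hf hx)).ne'
  rw [← Function.iterate_succ_apply' f n, iterate_eq_div_pow_mul hJ hf hsq (n + 1) x hx,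
    iterate_eq_div_pow_mul hJ hf hsq n x hx, pow_succ]
  field_simp

theorem monotoneOn_div (hJ : J ⊆ Ioi 0) (hf : MapsTo f J J)
    (hsq : ∀ x ∈ J, f (f x) * x = f x ^ 2) (hmono : MonotoneOn f J) :
    MonotoneOn (fun x => f x / x) J := by
  intro a ha b hb hab
  refine le_of_forall_pow_mul_le (y := b) (div_pos (hJ (hf hb)) (hJ hb)) (hJ ha) fun n => ?_
  rw [← iterate_eq_div_pow_mul hJ hf hsq n a ha, ← iterate_eq_div_pow_mul hJ hf hsq n b hb]
  exact hmono.iterate hf n ha hb hab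

theorem div_eq_div_of_monotoneOn (hJ : J ⊆ Ioi 0) (hJI : J.OrdConnected) (hf : MapsTo f J J)
    (hfc : ContinuousOn f J) (hmono : MonotoneOn f J) (hsq : ∀ x ∈ J, f (f x) * x = f x ^ 2)
    {u v : ℝ} (hu : u ∈ J) (hv : v ∈ J) : f u / u = f v / v := by
  set g : ℝ → ℝ := fun x => f x / x
  have hg : MonotoneOn g J := monotoneOn_div hJ hf hsq hmono
  -- an orbit with ratio `≠ 1` sweeps out `J` on one side of its start, where `g` is thus constant
  have hright : ∀ w ∈ J, 1 < g w → ∀ y ∈ J, w ≤ y → g y ≤ g w := by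
    intro w hw hgw y hy hwy
    obtain ⟨n, hn⟩ := pow_unbounded_of_one_lt (y / w) hgw
    have hyn : y ≤ f^[n] w := by
      rw [iterate_eq_div_pow_mul hJ hf hsq n w hw]
      exact ((div_lt_iff₀ (hJ hw)).mp hn).le
    calc g y ≤ g (f^[n] w) := hg hy (hf.iterate n hw) hyn
      _ = g w := div_iterate_eq hJ hf hsq n hw
  have hleft : ∀ w ∈ J, g w < 1 → ∀ y ∈ J, y ≤ w → g w ≤ g y := by
    intro w hw hgw y hy hyw
    obtain ⟨n, hn⟩ := exists_pow_lt_of_lt_one (div_pos (hJ hy) (hJ hw)) hgw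
    have hyn : f^[n] w ≤ y := by
      rw [iterate_eq_div_pow_mul hJ hf hsq n w hw]
      exact ((lt_div_iff₀ (hJ hw)).mp hn).le
    calc g w = g (f^[n] w) := (div_iterate_eq hJ hf hsq n hw).symm
      _ ≤ g y := hg (hf.iterate n hw) hy hyn
  have hgc : ContinuousOn g J := hfc.div continuousOn_id fun x hx => (hJ hx).ne'
  have key : ∀ u ∈ J, ∀ v ∈ J, u < v → g u = g v := by
    intro u hu v hv huv
    refine (hg hu hv huv.le).antisymm (not_lt.mp fun hlt => ?_)
    obtain ⟨c, hc, hc1⟩ := (Ioo_infinite hlt).nontrivial.exists_ne 1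
    obtain ⟨w, hw, rfl⟩ := intermediate_value_Ioo huv.le (hgc.mono (hJI.out hu hv)) hc
    have hwJ : w ∈ J := hJI.out hu hv (Ioo_subset_Icc_self hw)
    rcases hc1.lt_or_gt with h1 | h1
    · exact (hleft w hwJ h1 u hu hw.1.le).not_gt hc.1
    · exact (hright w hwJ h1 v hv hw.2.le).not_gt hc.2
  rcases lt_trichotomy u v with h | rfl | h
  · exact key u hu v hv h
  · rfl
  · exact (key v hv u hu h).symm

theorem exists_eq_mul_of_monotoneOn (hJ : J ⊆ Ioi 0) (hJI : J.OrdConnected) (hf : MapsTo f J J)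
    (hfc : ContinuousOn f J) (heq : ∀ x ∈ J, f^[3] x = f x ^ 3 / x ^ 2)
    (hmono : MonotoneOn f J) (hne : J.Nonempty) : ∃ c > 0, ∀ x ∈ J, f x = c * x := by
  have hsq := fun x hx => mul_eq_sq_of_monotoneOn hJ hf heq hmono (x := x) hx
  obtain ⟨a, ha⟩ := hne
  refine ⟨f a / a, div_pos (hJ (hf ha)) (hJ ha), fun x hx => ?_⟩
  rw [← div_eq_div_of_monotoneOn hJ hJI hf hfc hmono hsq hx ha, div_mul_cancel₀ _ (hJ hx).ne']

theorem iterate_eq_pow_mul {c : ℝ} (hf : MapsTo f J J) (hlin : ∀ x ∈ J, f x = c * x) {x : ℝ}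
    (hx : x ∈ J) (n : ℕ) : f^[n] x = c ^ n * x := by
  induction n with
  | zero => simp
  | succ n ih => rw [Function.iterate_succ_apply', hlin _ (hf.iterate n hx), ih, pow_succ']; ring

theorem le_one_of_isBounded {c : ℝ} (hJ : J ⊆ Ioi 0) (hf : MapsTo f J J)
    (hlin : ∀ x ∈ J, f x = c * x) {a : ℝ} (ha : a ∈ J) (hb : Bornology.IsBounded J) : c ≤ 1 := by
  by_contra! hc
  obtain ⟨M, hM⟩ := hb.bddAbove
  obtain ⟨n, hn⟩ := pow_unbounded_of_one_lt (M / a) hc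
  have hle := hM (hf.iterate n ha)
  rw [iterate_eq_pow_mul hf hlin ha] at hle
  rw [div_lt_iff₀ (hJ ha)] at hn
  linarith

theorem one_le_of_zero_notMem_closure {c : ℝ} (hf : MapsTo f J J)
    (hlin : ∀ x ∈ J, f x = c * x) (hc : 0 ≤ c) {a : ℝ} (ha : a ∈ J)
    (h0 : (0 : ℝ) ∉ closure J) : 1 ≤ c := by
  by_contra! hc1
  have hlim := (tendsto_pow_atTop_nhds_zero_of_lt_one hc hc1).mul_const a
  rw [zero_mul] at hlim
  refine h0 (mem_closure_of_tendsto hlim (Eventually.of_forall fun n => ?_))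
  rw [← iterate_eq_pow_mul hf hlin ha]
  exact hf.iterate n ha

theorem exists_mul_ne_sq_of_strictAntiOn (hJ : J ⊆ Ioi 0) (hf : MapsTo f J J)
    (hanti : StrictAntiOn f J) (hne : ∃ a ∈ J, ∃ b ∈ J, a ≠ b) :
    ∃ x ∈ J, f (f x) * x ≠ f x ^ 2 := by
  by_contra! hsq
  obtain ⟨a, ha, b, hb, hab⟩ := hne
  wlog hlt : a < b generalizing a b
  · exact this b hb a ha hab.symm (hab.lt_or_gt.resolve_left hlt)
  have h1 : f b < f a := hanti ha hb hlt
  have h2 : f (f a) < f (f b) := hanti (hf hb) (hf ha) h1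
  have h3 : f a ^ 2 < f b ^ 2 := by
    rw [← hsq a ha, ← hsq b hb]
    exact mul_lt_mul'' h2 hlt (hJ (hf (hf ha))).le (hJ ha).le
  exact h3.not_gt (pow_lt_pow_left₀ h1 (hJ (hf hb)).le two_ne_zero)

theorem not_isBounded_and_zero_mem_closure_of_strictAntiOn (hJ : J ⊆ Ioi 0) (hf : MapsTo f J J)
    (heq : ∀ x ∈ J, f^[3] x = f x ^ 3 / x ^ 2) (hanti : StrictAntiOn f J)
    (hne : ∃ a ∈ J, ∃ b ∈ J, a ≠ b) :
    ¬ Bornology.IsBounded J ∧ (0 : ℝ) ∈ closure J := by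
  obtain ⟨x, hx, hD⟩ := exists_mul_ne_sq_of_strictAntiOn hJ hf hanti hne
  obtain ⟨hup, hdown⟩ := iterate_unbounded_of_mul_ne_sq hJ hf heq hx hD
  refine ⟨fun hb => ?_, Metric.mem_closure_iff.mpr fun ε hε => ?_⟩
  · obtain ⟨M, hM⟩ := hb.bddAbove
    obtain ⟨n, hn⟩ := hup M
    exact hn.not_ge (hM (hf.iterate n hx))
  · obtain ⟨n, hn⟩ := hdown ε hε
    refine ⟨f^[n] x, hf.iterate n hx, ?_⟩
    rwa [dist_zero_left, Real.norm_of_nonneg (hJ (hf.iterate n hx)).le]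

theorem exists_log_eq_of_backward_orbit (hJ : J ⊆ Ioi 0)
    (heq : ∀ x ∈ J, f^[3] x = f x ^ 3 / x ^ 2) {v : ℕ → ℝ}
    (hv : ∀ n, v n ∈ J ∧ f (v (n + 1)) = v n) :
    ∃ A B C : ℝ, ∀ n : ℕ, log (v n) = A + B * n + C * (-1 / 2) ^ n := by
  refine exists_eq_add_mul_add_mul_pow (by norm_num) fun n => ?_
  have h3 : f^[3] (v (n + 3)) = v n := by
    change f (f (f (v (n + 3)))) = v n
    rw [(hv (n + 2)).2, (hv (n + 1)).2, (hv n).2]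
  have hlog : log (v n) = 3 * log (v (n + 2)) - 2 * log (v (n + 3)) := by
    rw [← h3, heq _ (hv (n + 3)).1, (hv (n + 2)).2,
      log_pow_three_div_sq (hJ (hv (n + 2)).1).ne' (hJ (hv (n + 3)).1).ne']
  linarith

end

section

variable {f : ℝ → ℝ}

theorem surjOn_Ioi_of_antitoneOn (hf : MapsTo f (Ioi 0) (Ioi 0)) (hfc : ContinuousOn f (Ioi 0))
    (heq : ∀ x ∈ Ioi (0 : ℝ), f^[3] x = f x ^ 3 / x ^ 2) (hanti : AntitoneOn f (Ioi 0)) :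
    SurjOn f (Ioi 0) (Ioi 0) := by
  intro y (hy : 0 < y)
  have h1 : (1 : ℝ) ∈ Ioi 0 := mem_Ioi.mpr one_pos
  have hf1 : 0 < f 1 := hf h1
  have hmem : ∀ x > 0, f^[3] x ∈ f '' Ioi 0 := fun x hx => ⟨f^[2] x, hf.iterate 2 hx, rfl⟩
  -- `f³ x = (f x)³ / x²` is at most `(f 1)³ / x` for `x ≥ 1` and at least that for `x ≤ 1`
  have hlow : f^[3] (max 1 (f 1 ^ 3 / y)) ≤ y := by
    set x := max 1 (f 1 ^ 3 / y)
    have hx1 : 1 ≤ x := le_max_left _ _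
    have hx0 : 0 < x := one_pos.trans_le hx1
    rw [heq x hx0]
    calc f x ^ 3 / x ^ 2 ≤ f 1 ^ 3 / x ^ 2 := by
          gcongr
          · exact (hf hx0).le
          · exact hanti h1 hx0 hx1
      _ ≤ f 1 ^ 3 / x := by gcongr; nlinarith
      _ ≤ y := (div_le_iff₀ hx0).mpr ((div_le_iff₀' hy).mp (le_max_right _ _))
  have hhigh : y ≤ f^[3] (min 1 (f 1 ^ 3 / y)) := by
    set x := min 1 (f 1 ^ 3 / y)
    have hx1 : x ≤ 1 := min_le_left _ _
    have hx0 : 0 < x := lt_min one_pos (by positivity)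
    rw [heq x hx0]
    calc y ≤ f 1 ^ 3 / x := (le_div_iff₀ hx0).mpr ((le_div_iff₀' hy).mp (min_le_right _ _))
      _ ≤ f 1 ^ 3 / x ^ 2 := by gcongr; nlinarith
      _ ≤ f x ^ 3 / x ^ 2 := by gcongr; exact hanti hx0 h1 hx1
  exact (isPreconnected_Ioi.image f hfc).Icc_subset (hmem _ (by positivity))
    (hmem _ (by positivity)) ⟨hlow, hhigh⟩

theorem log_sub_mul_log_sub_nonpos_of_backward_orbit (hanti : StrictAntiOn f (Ioi 0)) {p : ℝ}
    (hp : 0 < p) (hfp : f p = p) {v : ℕ → ℝ} (hv : ∀ n, v n ∈ Ioi 0 ∧ f (v (n + 1)) = v n)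
    (n : ℕ) : (log (v (n + 1)) - log (v n)) * (log (v (n + 2)) - log (v (n + 1))) ≤ 0 := by
  have hpos (k : ℕ) : 0 < v k := (hv k).1
  rcases hanti.zigzag hp hfp (hv (n + 1)).1 (hv (n + 2)).1 (hv (n + 1)).2 with
    ⟨h1, h2⟩ | ⟨h1, h2⟩ <;> rw [(hv n).2] at h1
  · exact mul_nonpos_of_nonneg_of_nonpos (sub_nonneg.mpr (log_le_log (hpos n) h1))
      (sub_nonpos.mpr (log_le_log (hpos (n + 2)) h2))
  · exact mul_nonpos_of_nonpos_of_nonneg (sub_nonpos.mpr (log_le_log (hpos (n + 1)) h1))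
      (sub_nonneg.mpr (log_le_log (hpos (n + 1)) h2))

theorem eq_div_sq_of_backward_orbit (hfc : ContinuousOn f (Ioi 0))
    (hanti : StrictAntiOn f (Ioi 0)) (heq : ∀ x ∈ Ioi (0 : ℝ), f^[3] x = f x ^ 3 / x ^ 2)
    {p : ℝ} (hp : 0 < p) (hfp : f p = p) {v : ℕ → ℝ}
    (hv : ∀ n, v n ∈ Ioi 0 ∧ f (v (n + 1)) = v n) : v 0 = p ^ 3 / v 1 ^ 2 := by
  obtain ⟨A, B, C, hu⟩ := exists_log_eq_of_backward_orbit subset_rfl heq hv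
  have hB : B = 0 := eq_zero_of_sub_mul_sub_nonpos (by norm_num [abs_of_neg]) hu
    (log_sub_mul_log_sub_nonpos_of_backward_orbit hanti hp hfp hv)
  have hlim : Tendsto v atTop (𝓝 (exp A)) := by
    have hr := ((tendsto_pow_atTop_nhds_zero_of_abs_lt_one (r := -1 / 2)
      (by norm_num [abs_of_neg])).const_mul C).const_add A
    rw [mul_zero, add_zero] at hr
    refine ((continuous_exp.tendsto A).comp hr).congr fun n => ?_
    rw [Function.comp_apply, ← exp_log (hv n).1, hu, hB]
    ring_nf
  have hfix : f (exp A) = exp A := by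
    refine tendsto_nhds_unique ((hfc.continuousAt (Ioi_mem_nhds (exp_pos A))).tendsto.comp
      (hlim.comp (tendsto_add_atTop_nat 1))) (hlim.congr fun n => ?_)
    exact ((hv n).2).symm
  have hA : exp A = p := hanti.eq_of_apply_eq_self (exp_pos A) hp hfix hfp
  refine log_injOn_pos (hv 0).1 (div_pos (pow_pos hp 3) (pow_pos (hv 1).1 2)) ?_
  rw [log_pow_three_div_sq hp.ne' (hv 1).1.ne', hu 0, hu 1, hB, ← hA, log_exp]
  push_cast
  ring

theorem exists_eq_div_sq_of_strictAntiOn (hf : MapsTo f (Ioi 0) (Ioi 0))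
    (hfc : ContinuousOn f (Ioi 0)) (heq : ∀ x ∈ Ioi (0 : ℝ), f^[3] x = f x ^ 3 / x ^ 2)
    (hanti : StrictAntiOn f (Ioi 0)) : ∃ c > 0, ∀ x ∈ Ioi (0 : ℝ), f x = c / x ^ 2 := by
  obtain ⟨p, hp, hfp⟩ :=
    hanti.antitoneOn.exists_isFixedPt ordConnected_Ioi hf hfc (x := 1) (mem_Ioi.mpr one_pos)
  refine ⟨p ^ 3, pow_pos hp 3, fun y hy => ?_⟩
  obtain ⟨v, hv0, hv⟩ :=
    (surjOn_Ioi_of_antitoneOn hf hfc heq hanti.antitoneOn).exists_backward_orbit (hf hy)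
  have hv1 : v 1 = y := hanti.injOn (hv 1).1 hy ((hv 0).2.trans hv0)
  rw [← hv0, ← hv1]
  exact eq_div_sq_of_backward_orbit hfc hanti heq hp hfp hv

end

/-- Solution of the original Boros problem: continuous solutions `f : J → J` of
`f³(x) = f(x)³ / x²` on a nondegenerate interval `J ⊆ (0, ∞)`. -/
theorem boros_problem_cubic
    (J : Set ℝ) (hJ : J ⊆ Set.Ioi (0 : ℝ)) (hJI : J.OrdConnected)
    (hne : ∃ a ∈ J, ∃ b ∈ J, a ≠ b)
    (f : ℝ → ℝ) (hf : Set.MapsTo f J J) (hfc : ContinuousOn f J)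
    (heq : ∀ x ∈ J, f^[3] x = (f x) ^ 3 / x ^ 2) :
    (Bornology.IsBounded J → (0 : ℝ) ∉ closure J → ∀ x ∈ J, f x = x) ∧
    (Bornology.IsBounded J → (0 : ℝ) ∈ closure J →
      ∃ c ∈ Set.Ioc (0 : ℝ) 1, ∀ x ∈ J, f x = c * x) ∧
    (¬ Bornology.IsBounded J → (0 : ℝ) ∉ closure J →
      ∃ c ∈ Set.Ici (1 : ℝ), ∀ x ∈ J, f x = c * x) ∧
    (J = Set.Ioi (0 : ℝ) →
      ∃ c ∈ Set.Ioi (0 : ℝ), (∀ x ∈ J, f x = c * x) ∨ (∀ x ∈ J, f x = c / x ^ 2)) := by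
  rcases hfc.strictMonoOn_of_injOn_ordConnected hJI (injOn_of_iterate_three_eq hJ hf heq) with
    hmono | hanti
  · obtain ⟨a, ha, -⟩ := hne
    obtain ⟨c, hc, hlin⟩ :=
      exists_eq_mul_of_monotoneOn hJ hJI hf hfc heq hmono.monotoneOn ⟨a, ha⟩
    have hc_le (hb : Bornology.IsBounded J) : c ≤ 1 := le_one_of_isBounded hJ hf hlin ha hb
    have hc_ge (h0 : (0 : ℝ) ∉ closure J) : 1 ≤ c :=
      one_le_of_zero_notMem_closure hf hlin hc.le ha h0
    refine ⟨fun hb h0 x hx => ?_, fun hb _ => ⟨c, ⟨hc, hc_le hb⟩, hlin⟩,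
      fun _ h0 => ⟨c, hc_ge h0, hlin⟩, fun _ => ⟨c, hc, Or.inl hlin⟩⟩
    rw [hlin x hx, le_antisymm (hc_le hb) (hc_ge h0), one_mul]
  · obtain ⟨hunb, h0⟩ :=
      not_isBounded_and_zero_mem_closure_of_strictAntiOn hJ hf heq hanti hne
    refine ⟨fun hb => absurd hb hunb, fun hb => absurd hb hunb, fun _ h => absurd h0 h,
      fun hJ0 => ?_⟩
    subst hJ0
    obtain ⟨c, hc, hdiv⟩ := exists_eq_div_sq_of_strictAntiOn hf hfc heq hanti
    exact ⟨c, hc, Or.inr hdiv⟩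
end

section
/- Let n be an integer with n ≥ 2 and let I ⊂ ℝ be a nondegenerate interval. If a continuous and strictly decreasing function g : I → I satisfies g^n(x) = n·g(x) − (n−1)·x for every x ∈ I, then I = ℝ (and in particular g is surjective). -/
private lemma aux_iter_mono {g : ℝ → ℝ} {I : Set ℝ} (hg : Set.MapsTo g I I)
    (hgm : StrictAntiOn g I) : ∀ k, StrictMonoOn (g^[2*k]) I := by
  intro k
  induction k with
  | zero => intro x hx y hy hxy; simpa using hxy
  | succ k ih =>
    intro x hx y hy hxy
    have hgx := hg hx
    have hgy := hg hy
    have h1 : g y < g x := hgm hx hy hxy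
    have h2 : g (g x) < g (g y) := hgm hgy hgx h1
    have hggx := hg hgx
    have hggy := hg hgy
    have h3 := ih hggx hggy h2
    have e : ∀ z : ℝ, g^[2*(k+1)] z = g^[2*k] (g (g z)) := by
      intro z
      rw [show 2*(k+1) = 2*k + 2 by ring, Function.iterate_add_apply]
      simp [Function.iterate_succ_apply]
    rw [e x, e y]
    exact h3

/-- If a continuous strictly decreasing self-map `g` of a nondegenerate interval `I`
satisfies `g^n(x) = n·g(x) − (n−1)·x`, then `I = ℝ` and `g` is surjective. -/
theorem interval_eq_univ_of_decreasing_solution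
    (n : ℕ) (hn : 2 ≤ n)
    (I : Set ℝ) (hI : I.OrdConnected) (hne : ∃ a ∈ I, ∃ b ∈ I, a ≠ b)
    (g : ℝ → ℝ) (hg : Set.MapsTo g I I) (hgc : ContinuousOn g I)
    (hgm : StrictAntiOn g I)
    (heq : ∀ x ∈ I, g^[n] x = (n : ℝ) * g x - ((n : ℝ) - 1) * x) :
    I = Set.univ ∧ Set.SurjOn g I I := by
  obtain ⟨a, ha, b, hb, hab⟩ := hne
  have hmaps : ∀ k, Set.MapsTo (g^[k]) I I := fun k => hg.iterate k
  have hnR : (2:ℝ) ≤ (n:ℝ) := by exact_mod_cast hn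
  -- existence of a fixed point
  have hu : ∃ u ∈ I, u ≤ g u := by
    by_contra hcon
    push_neg at hcon
    have h1 : g a < a := hcon a ha
    have h2 : g (g a) < g a := hcon _ (hg ha)
    have h3 : g a < g (g a) := hgm (hg ha) ha h1
    linarith
  have hv : ∃ v ∈ I, g v ≤ v := by
    by_contra hcon
    push_neg at hcon
    have h1 : a < g a := hcon a ha
    have h2 : g a < g (g a) := hcon _ (hg ha)
    have h3 : g (g a) < g a := hgm ha (hg ha) h1
    linarith
  obtain ⟨u, huI, huleq⟩ := hu
  obtain ⟨v, hvI, hvleq⟩ := hv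
  have huv : u ≤ v := by
    by_contra hcon
    push_neg at hcon
    have := hgm hvI huI hcon
    linarith
  have hIcc : Set.Icc u v ⊆ I := hI.out huI hvI
  obtain ⟨p, hpmem, hfp⟩ :
      ∃ p ∈ Set.Icc u v, (fun x => g x - x) p = 0 := by
    have hcont : ContinuousOn (fun x => g x - x) (Set.Icc u v) :=
      (hgc.mono hIcc).sub continuousOn_id
    have h0 : (0:ℝ) ∈ Set.Icc (g v - v) (g u - u) := ⟨by linarith, by linarith⟩
    exact intermediate_value_Icc' huv hcont h0
  have hpI : p ∈ I := hIcc hpmem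
  have hgp : g p = p := by
    simp only at hfp; linarith
  have hiterp : ∀ k, g^[k] p = p := fun k => Function.iterate_fixed hgp k
  -- key step estimates
  have step_lt : ∀ z ∈ I, z < p → p + ((n:ℝ)-1)*(p-z) < g^[n] z := by
    intro z hz hzp
    have h1 : p < g z := by
      have := hgm hz hpI hzp
      rwa [hgp] at this
    have h2 := heq z hz
    nlinarith [mul_lt_mul_of_pos_left h1 (show (0:ℝ) < (n:ℝ) by linarith)]
  have step_gt : ∀ z ∈ I, p < z → g^[n] z < p - ((n:ℝ)-1)*(z-p) := by
    intro z hz hzp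
    have h1 : g z < p := by
      have := hgm hpI hz hzp
      rwa [hgp] at this
    have h2 := heq z hz
    nlinarith [mul_lt_mul_of_pos_left h1 (show (0:ℝ) < (n:ℝ) by linarith)]
  obtain ⟨x0, hx0I, hx0p⟩ : ∃ x ∈ I, x ≠ p := by
    by_cases hap : a = p
    · exact ⟨b, hb, fun h => hab (by rw [hap, h])⟩
    · exact ⟨a, ha, hap⟩
  rcases Nat.even_or_odd n with he | ho
  · -- even case : contradiction
    exfalso
    obtain ⟨m, hm⟩ := he
    have hmono : StrictMonoOn (g^[n]) I := by
      have := aux_iter_mono hg hgm m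
      rwa [show 2*m = n by omega] at this
    rcases lt_or_gt_of_ne hx0p with h | h
    · have h1 := step_lt x0 hx0I h
      have h2 : g^[n] x0 < g^[n] p := hmono hx0I hpI h
      rw [hiterp n] at h2
      nlinarith [mul_pos (show (0:ℝ) < (n:ℝ)-1 by linarith) (show (0:ℝ) < p - x0 by linarith)]
    · have h1 := step_gt x0 hx0I h
      have h2 : g^[n] p < g^[n] x0 := hmono hpI hx0I h
      rw [hiterp n] at h2
      nlinarith [mul_pos (show (0:ℝ) < (n:ℝ)-1 by linarith) (show (0:ℝ) < x0 - p by linarith)]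
  · -- odd case
    have hn3 : 3 ≤ n := by
      rcases ho with ⟨m, hm⟩; omega
    have hnm1 : (2:ℝ) ≤ (n:ℝ) - 1 := by
      have h3 : (3:ℝ) ≤ (n:ℝ) := by exact_mod_cast hn3
      linarith
    have base : ∃ d : ℝ, 0 < d ∧ (∃ z ∈ I, p + d ≤ z) ∧ (∃ z ∈ I, z ≤ p - d) := by
      rcases lt_or_gt_of_ne hx0p with h | h
      · refine ⟨p - x0, by linarith, ⟨g^[n] x0, hmaps n hx0I, ?_⟩, ⟨x0, hx0I, by linarith⟩⟩
        have h1 := step_lt x0 hx0I h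
        nlinarith [mul_le_mul_of_nonneg_right (show (1:ℝ) ≤ (n:ℝ)-1 by linarith)
          (show (0:ℝ) ≤ p - x0 by linarith)]
      · refine ⟨x0 - p, by linarith, ⟨x0, hx0I, by linarith⟩, ⟨g^[n] x0, hmaps n hx0I, ?_⟩⟩
        have h1 := step_gt x0 hx0I h
        nlinarith [mul_le_mul_of_nonneg_right (show (1:ℝ) ≤ (n:ℝ)-1 by linarith)
          (show (0:ℝ) ≤ x0 - p by linarith)]
    obtain ⟨d, hd, hbase⟩ := base
    have main : ∀ k : ℕ,
        (∃ z ∈ I, p + ((n:ℝ)-1)^k * d ≤ z) ∧ (∃ z ∈ I, z ≤ p - ((n:ℝ)-1)^k * d) := by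
      intro k
      induction k with
      | zero => simpa using hbase
      | succ k ih =>
        obtain ⟨⟨zp, hzpI, hzp⟩, ⟨zm, hzmI, hzm⟩⟩ := ih
        have hDpos : 0 < ((n:ℝ)-1)^k * d :=
          mul_pos (pow_pos (by linarith) k) hd
        constructor
        · refine ⟨g^[n] zm, hmaps n hzmI, ?_⟩
          have hzmlt : zm < p := by linarith
          have h1 := step_lt zm hzmI hzmlt
          have h3 : ((n:ℝ)-1)^k * d ≤ p - zm := by linarith
          have h2 : ((n:ℝ)-1)^(k+1) * d = ((n:ℝ)-1) * (((n:ℝ)-1)^k * d) := by ring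
          rw [h2]
          nlinarith [mul_le_mul_of_nonneg_left h3 (show (0:ℝ) ≤ (n:ℝ)-1 by linarith)]
        · refine ⟨g^[n] zp, hmaps n hzpI, ?_⟩
          have hzpgt : p < zp := by linarith
          have h1 := step_gt zp hzpI hzpgt
          have h3 : ((n:ℝ)-1)^k * d ≤ zp - p := by linarith
          have h2 : ((n:ℝ)-1)^(k+1) * d = ((n:ℝ)-1) * (((n:ℝ)-1)^k * d) := by ring
          rw [h2]
          nlinarith [mul_le_mul_of_nonneg_left h3 (show (0:ℝ) ≤ (n:ℝ)-1 by linarith)]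
    have hIuniv : I = Set.univ := by
      ext t
      simp only [Set.mem_univ, iff_true]
      obtain ⟨k, hk⟩ : ∃ k : ℕ, |t - p| < ((n:ℝ)-1)^k * d := by
        obtain ⟨k, hk⟩ := pow_unbounded_of_one_lt (|t - p| / d)
          (show (1:ℝ) < (n:ℝ)-1 by linarith)
        exact ⟨k, by rwa [div_lt_iff₀ hd] at hk⟩
      obtain ⟨⟨z1, hz1I, hz1⟩, ⟨z2, hz2I, hz2⟩⟩ := main k
      have habs := abs_lt.mp hk
      exact hI.out hz2I hz1I ⟨by linarith [habs.1], by linarith [habs.2]⟩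
    refine ⟨hIuniv, ?_⟩
    rw [hIuniv] at hgc step_lt step_gt hmaps ⊢
    intro y _
    -- a point far below p, whose n-th iterate is above y
    set z1 : ℝ := min (p - 1) (2*p - y - 1) with hz1def
    have hz1lt : z1 < p := lt_of_le_of_lt (min_le_left _ _) (by linarith)
    have h1 := step_lt z1 (Set.mem_univ _) hz1lt
    have hw1 : y < g^[n] z1 := by
      have h3 : z1 ≤ 2*p - y - 1 := min_le_right _ _
      nlinarith [mul_le_mul_of_nonneg_right (show (1:ℝ) ≤ (n:ℝ)-1 by linarith)
        (show (0:ℝ) ≤ p - z1 by linarith)]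
    set z2 : ℝ := max (p + 1) (2*p - y + 1) with hz2def
    have hz2gt : p < z2 := lt_of_lt_of_le (by linarith) (le_max_left _ _)
    have h2 := step_gt z2 (Set.mem_univ _) hz2gt
    have hw2 : g^[n] z2 < y := by
      have h3 : 2*p - y + 1 ≤ z2 := le_max_right _ _
      nlinarith [mul_le_mul_of_nonneg_right (show (1:ℝ) ≤ (n:ℝ)-1 by linarith)
        (show (0:ℝ) ≤ z2 - p by linarith)]
    have hiter : ∀ z : ℝ, g^[n] z = g (g^[n-1] z) := by
      intro z
      conv_lhs => rw [show n = (n-1) + 1 by omega]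
      rw [Function.iterate_succ_apply']
    have hy1 : y < g (g^[n-1] z1) := by rw [← hiter]; exact hw1
    have hy2 : g (g^[n-1] z2) < y := by rw [← hiter]; exact hw2
    have hcont : ContinuousOn g (Set.uIcc (g^[n-1] z2) (g^[n-1] z1)) :=
      hgc.mono (by simp)
    have hmem : y ∈ Set.uIcc (g (g^[n-1] z2)) (g (g^[n-1] z1)) := by
      rw [Set.mem_uIcc]
      exact Or.inl ⟨le_of_lt hy2, le_of_lt hy1⟩
    obtain ⟨x, _, hx⟩ := intermediate_value_uIcc hcont hmem
    exact ⟨x, Set.mem_univ x, hx⟩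
end

section
/- Let n be an odd integer with n ≥ 3. Then the polynomial r^n − n·r + n − 1 has exactly one real root r₀ different from 1; moreover r₀ < −1, r₀ is a simple root (its multiplicity equals 1), and every non-real complex root z of r^n − n·r + n − 1 satisfies |z| < −r₀. -/
open Polynomial Set

/-!
Write `g x = x ^ n - n * x`, so the polynomial is `g r + (n - 1)`. Since `g' x = n (x ^ (n - 1) - 1)`,
`g` decreases on `[-1, 1]` and increases on `[1, ∞)`, so `g r > g 1 = 1 - n` for `-1 ≤ r ≠ 1`.
As `n` is odd, `g` is odd, and the remaining real roots are the `-s` with `s > 1` and `g s = n - 1`: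
there is exactly one such `s`, and `g' (-s) ≠ 0` makes `-s` a simple root. For a non-real root `z`,
`n z` and `-(n - 1)` do not lie on a common ray, so the strict triangle inequality gives
`‖z‖ ^ n < n ‖z‖ + (n - 1)`, that is `g ‖z‖ < g s`, whence `‖z‖ < s`.
-/

theorem Polynomial.rootMultiplicity_eq_one_of_eval_derivative_ne_zero {R : Type*} [CommRing R]
    {p : R[X]} {a : R} (hroot : p.IsRoot a) (hder : p.derivative.eval a ≠ 0) :
    p.rootMultiplicity a = 1 := by
  have hp : p ≠ 0 := by rintro rfl; simp at hder
  have hpos := (rootMultiplicity_pos hp).2 hroot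
  have hle := (one_lt_rootMultiplicity_iff_isRoot hp).not.2 fun h => hder h.2
  omega

theorem Complex.norm_sub_ofReal_lt_of_im_ne_zero {z : ℂ} (hz : z.im ≠ 0) {a : ℝ} (ha : 0 < a) :
    ‖z - a‖ < ‖z‖ + a := by
  have hray : ¬SameRay ℝ z (-a) := by
    rw [Complex.sameRay_iff]
    rintro (h | h | h)
    · exact hz (by simp [h])
    · exact ha.ne' (by simpa using h)
    · have : (-(a : ℂ)).arg = Real.pi := Complex.arg_eq_pi_iff.2 ⟨by simpa using ha, by simp⟩
      exact hz (Complex.arg_eq_pi_iff.1 (h.trans this)).2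
  simpa [sub_eq_add_neg, abs_of_pos ha] using norm_add_lt_of_not_sameRay hray

theorem hasDerivAt_pow_sub_mul (n : ℕ) (x : ℝ) :
    HasDerivAt (fun x : ℝ => x ^ n - n * x) (n * x ^ (n - 1) - n) x := by
  simpa using (hasDerivAt_pow n x).fun_sub ((hasDerivAt_id x).const_mul (n : ℝ))

theorem strictMonoOn_pow_sub_mul {n : ℕ} (hn : 2 ≤ n) :
    StrictMonoOn (fun x : ℝ => x ^ n - n * x) (Ici 1) := by
  refine strictMonoOn_of_deriv_pos (convex_Ici 1) (by fun_prop) fun x hx => ?_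
  rw [interior_Ici, mem_Ioi] at hx
  rw [(hasDerivAt_pow_sub_mul n x).deriv]
  have hpow : 1 < x ^ (n - 1) := one_lt_pow₀ hx (by omega)
  have hn0 : (0 : ℝ) < n := by positivity
  nlinarith

theorem strictAntiOn_pow_sub_mul {n : ℕ} (hn : 2 ≤ n) :
    StrictAntiOn (fun x : ℝ => x ^ n - n * x) (Icc (-1) 1) := by
  refine strictAntiOn_of_deriv_neg (convex_Icc (-1) 1) (by fun_prop) fun x hx => ?_
  rw [interior_Icc, mem_Ioo] at hx
  rw [(hasDerivAt_pow_sub_mul n x).deriv]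
  have hpow : x ^ (n - 1) < 1 := calc
    x ^ (n - 1) ≤ |x| ^ (n - 1) := by rw [← abs_pow]; exact le_abs_self _
    _ < 1 := pow_lt_one₀ (abs_nonneg x) (abs_lt.2 hx) (by omega)
  have hn0 : (0 : ℝ) < n := by positivity
  nlinarith

theorem one_sub_lt_pow_sub_mul {n : ℕ} (hn : 2 ≤ n) {r : ℝ} (hr : -1 ≤ r) (hr1 : r ≠ 1) :
    1 - n < r ^ n - n * r := by
  have hg1 : (1 : ℝ) ^ n - n * 1 = 1 - n := by ring
  rcases hr1.lt_or_gt with h | h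
  · exact hg1 ▸ strictAntiOn_pow_sub_mul hn ⟨hr, h.le⟩ ⟨by norm_num, le_rfl⟩ h
  · exact hg1 ▸ strictMonoOn_pow_sub_mul hn self_mem_Ici (mem_Ici.2 h.le) h

theorem exists_one_lt_pow_sub_mul_eq {n : ℕ} (hn : 2 ≤ n) :
    ∃ s : ℝ, 1 < s ∧ s ^ n - n * s = n - 1 := by
  have hn2 : (2 : ℝ) ≤ n := by exact_mod_cast hn
  have hlarge : (n - 1 : ℝ) ≤ (n + 1) ^ n - n * (n + 1) := by
    have : ((n : ℝ) + 1) ^ 2 ≤ (n + 1) ^ n := pow_le_pow_right₀ (by linarith) hn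
    nlinarith
  obtain ⟨s, ⟨hs1, -⟩, hs⟩ := intermediate_value_Icc (a := (1 : ℝ)) (b := n + 1) (by linarith)
    (f := fun x : ℝ => x ^ n - n * x) (by fun_prop)
    ⟨by simp only [one_pow, mul_one]; linarith, hlarge⟩
  refine ⟨s, hs1.lt_of_ne ?_, hs⟩
  rintro rfl
  norm_num at hs
  linarith

theorem norm_pow_sub_mul_lt_of_im_ne_zero {n : ℕ} (hn : 2 ≤ n) {z : ℂ} (hz : z.im ≠ 0)
    (hroot : z ^ n - n * z + n - 1 = 0) : ‖z‖ ^ n - n * ‖z‖ < n - 1 := by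
  have hn1 : (0 : ℝ) < n - 1 := by
    have : (2 : ℝ) ≤ n := by exact_mod_cast hn
    linarith
  have hbound : ‖z‖ ^ n < n * ‖z‖ + (n - 1) := calc
    ‖z‖ ^ n = ‖n * z - ((n - 1 : ℝ) : ℂ)‖ := by
      rw [← norm_pow]; congr 1; push_cast; linear_combination hroot
    _ < ‖(n : ℂ) * z‖ + (n - 1) :=
      Complex.norm_sub_ofReal_lt_of_im_ne_zero (by simpa using ⟨by omega, hz⟩) hn1
    _ = n * ‖z‖ + (n - 1) := by simp
  linarith

/-- For odd `n ≥ 3`, the polynomial `r^n − n·r + n − 1` has exactly one real root `r₀`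
different from `1`; moreover `r₀ < −1`, `r₀` is a simple root, and every non-real
complex root `z` satisfies `|z| < −r₀`. -/
theorem real_root_of_characteristic_odd
    (n : ℕ) (hn : 3 ≤ n) (hodd : Odd n) :
    ∃ r₀ : ℝ, r₀ ≠ 1 ∧ r₀ ^ n - (n : ℝ) * r₀ + (n : ℝ) - 1 = 0 ∧
      (∀ r : ℝ, r ≠ 1 → r ^ n - (n : ℝ) * r + (n : ℝ) - 1 = 0 → r = r₀) ∧
      r₀ < -1 ∧
      ((X ^ n - C (n : ℝ) * X + C ((n : ℝ) - 1)).rootMultiplicity r₀ = 1) ∧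
      (∀ z : ℂ, z.im ≠ 0 → z ^ n - (n : ℂ) * z + (n : ℂ) - 1 = 0 →
        ‖z‖ < -r₀) := by
  have hn2 : 2 ≤ n := by omega
  obtain ⟨s, hs1, hs⟩ := exists_one_lt_pow_sub_mul_eq hn2
  have hneg (x : ℝ) : (-x) ^ n - n * (-x) + n - 1 = n - 1 - (x ^ n - n * x) := by
    rw [hodd.neg_pow]; ring
  refine ⟨-s, by linarith, by rw [hneg, hs]; ring, ?_, by linarith, ?_, ?_⟩
  · intro r hr1 hr
    rcases le_or_gt (-1) r with h | h
    · linarith [one_sub_lt_pow_sub_mul hn2 h hr1]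
    · have hgr : (-r) ^ n - n * (-r) = n - 1 := by linarith [neg_neg r ▸ hneg (-r)]
      have hrs := (strictMonoOn_pow_sub_mul hn2).injOn (mem_Ici.2 (by linarith)) hs1.le
        (hgr.trans hs.symm)
      linarith
  · refine rootMultiplicity_eq_one_of_eval_derivative_ne_zero ?_ ?_
    · simp only [IsRoot, eval_add, eval_sub, eval_mul, eval_pow, eval_X, eval_C]
      linarith [hneg s]
    · have hder : (X ^ n - C (n : ℝ) * X + C ((n : ℝ) - 1)).derivative.eval (-s)
          = n * (-s) ^ (n - 1) - n := by
        simp [derivative_X_pow]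
      have hpow : 1 < (-s) ^ (n - 1) := by
        rw [(Nat.Odd.sub_odd hodd odd_one).neg_pow]; exact one_lt_pow₀ hs1 (by omega)
      have hn0 : (0 : ℝ) < n := by positivity
      rw [hder]
      nlinarith
  · intro z hz hroot
    have hlt := norm_pow_sub_mul_lt_of_im_ne_zero hn2 hz hroot
    by_contra! h
    rw [neg_neg] at h
    linarith [(strictMonoOn_pow_sub_mul hn2).le_iff_le hs1.le (hs1.le.trans h) |>.2 h]
end

section
/- Let n be an integer with n ≥ 2. If z ∈ ℂ \ ℝ is a non-real complex root of the polynomial r^n − n·r + n − 1, then |z| > 1. -/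
/-!
Dividing `z ^ n - n * z + n - 1` by `z - 1` shows that a root `z ≠ 1` satisfies
`1 + z + ⋯ + z ^ (n - 1) = n`. If `‖z‖ ≤ 1`, each of these `n` terms has real part at most `1`,
so all real parts equal `1`; in particular `z.re = 1 ≥ ‖z‖`, which forces `z` to be real.
-/

open Finset

theorem geom_sum_eq_of_pow_sub_mul_add_sub_eq_zero {R : Type*} [CommRing R] [NoZeroDivisors R]
    {z : R} (hz : z ≠ 1) {n : ℕ} (h : z ^ n - n * z + n - 1 = 0) :
    ∑ k ∈ range n, z ^ k = n := by
  have hfactor : (∑ k ∈ range n, z ^ k - n) * (z - 1) = 0 := by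
    rw [sub_mul, geom_sum_mul]
    linear_combination h
  exact sub_eq_zero.mp ((mul_eq_zero.mp hfactor).resolve_right (sub_ne_zero.mpr hz))

namespace Complex

theorem re_eq_one_of_norm_le_one_of_geom_sum_eq {z : ℂ} (hz : ‖z‖ ≤ 1) {n : ℕ} (hn : 2 ≤ n)
    (h : ∑ k ∈ range n, z ^ k = n) : z.re = 1 := by
  have hle : ∀ k ∈ range n, (z ^ k).re ≤ 1 := fun k _ =>
    (re_le_norm _).trans (by rw [norm_pow]; exact pow_le_one₀ (norm_nonneg z) hz)
  have hsum : ∑ k ∈ range n, (z ^ k).re = ∑ _k ∈ range n, (1 : ℝ) := by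
    simpa [← re_sum] using congrArg re h
  simpa using (sum_eq_sum_iff_of_le hle).mp hsum 1 (mem_range.mpr hn)

theorem im_eq_zero_of_norm_le_one_of_re_eq_one {z : ℂ} (hz : ‖z‖ ≤ 1) (hre : z.re = 1) :
    z.im = 0 := by
  have hnorm : |z.re| = ‖z‖ := le_antisymm (abs_re_le_norm z) (by rwa [hre, abs_one])
  exact abs_re_eq_norm.mp hnorm

end Complex

/-- For `n ≥ 2`, every non-real complex root of `r^n − n·r + n − 1` has modulus
greater than `1`. -/
theorem nonreal_root_abs_gt_one
    (n : ℕ) (hn : 2 ≤ n) (z : ℂ) (hz : z.im ≠ 0)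
    (hroot : z ^ n - (n : ℂ) * z + (n : ℂ) - 1 = 0) :
    1 < ‖z‖ := by
  by_contra! hle
  have hz1 : z ≠ 1 := by
    rintro rfl
    simp at hz
  have hgeom := geom_sum_eq_of_pow_sub_mul_add_sub_eq_zero hz1 hroot
  exact hz (Complex.im_eq_zero_of_norm_le_one_of_re_eq_one hle
    (Complex.re_eq_one_of_norm_le_one_of_geom_sum_eq hle hn hgeom))
end

section
/- Let n be an integer with n ≥ 3, let I ⊂ ℝ be a nondegenerate interval, and let g : I → I be a continuous function satisfying g^n(x) = n·g(x) − (n−1)·x for every x ∈ I. Then: if g is increasing, it satisfies g²(x) − 2·g(x) + x = 0 for every x ∈ I; and if g is decreasing, then n is odd and g satisfies g²(x) − (r₀ + 1)·g(x) + r₀·x = 0 for every x ∈ I, where r₀ denotes the unique negative real root of the polynomial r^n − n·r + n − 1. -/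
/-!
Write `d(t) = g t - t` and, off the fixed points, `ρ(t) = d(g t) / d(t)`. The equation at `t` and
at `g t` gives `d(gⁿ t) = n d(g t) - (n - 1) d(t)`, that is
`ρ(t) ρ(g t) ⋯ ρ(gⁿ⁻¹ t) = n ρ(t) - (n - 1)`.

If `g` is increasing, `ρ > 0`; bounding the product below by `ρ(t) (inf ρ)ⁿ⁻¹` and applying
Bernoulli's inequality gives `ρ ≥ 1`, and then the telescoped equation `gⁿ t - g t = (n - 1) d(t)`
forces `ρ ≤ 1`.

If `g` is decreasing, `n` is odd (otherwise `gⁿ` would be increasing) and `u = -ρ > 0` satisfies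
`∏ u = n u + n - 1`. Since `{u < 1}` is forward invariant, the product identity gives `u ≥ 1`, so by
the intermediate value theorem for `g ∘ g` every non-fixed point has a non-fixed preimage. Walking
backwards along orbits, a value of `u` near `inf u` forces `n` consecutive values near it, whence
`(inf u)ⁿ ≥ n inf u + n - 1`; fed back into the product identity this makes `u` constant, equal to
the positive root `-r₀` of `cⁿ = n c + n - 1`.
-/

open Function Set Filter Topology

lemma nat_mul_sub_lt_pow {n : ℕ} (hn : 2 ≤ n) {x : ℝ} (hx : 0 ≤ x) (hx1 : x ≠ 1) :
    n * x - (n - 1) < x ^ n := by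
  have h := one_add_mul_self_lt_rpow_one_add (s := x - 1) (by linarith) (sub_ne_zero.2 hx1)
    (p := n) (by exact_mod_cast hn)
  rw [add_sub_cancel, Real.rpow_natCast] at h
  linarith

lemma eq_of_pow_eq_nat_mul_add {n : ℕ} (hn : 2 ≤ n) {x y : ℝ} (hx : 0 < x) (hy : 0 < y)
    (hxn : x ^ n = n * x + (n - 1)) (hyn : y ^ n = n * y + (n - 1)) : x = y := by
  by_contra hne
  wlog hxy : x < y generalizing x y
  · exact this hy hx hyn hxn (Ne.symm hne) ((not_lt.1 hxy).lt_of_ne (Ne.symm hne))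
  have hpow : x ^ (n - 1) < y ^ (n - 1) := pow_lt_pow_left₀ hxy hx.le (by omega)
  have hsucc : ∀ z : ℝ, z ^ n = z * z ^ (n - 1) := fun z => by
    rw [← pow_succ', Nat.sub_add_cancel (by omega)]
  have hn1 : (1 : ℝ) ≤ n - 1 := by
    have : (2 : ℝ) ≤ n := by exact_mod_cast hn
    linarith
  rw [hsucc] at hxn hyn
  nlinarith [mul_pos hx hy, mul_lt_mul_of_pos_left hpow (mul_pos hx hy)]

-- `w = a (n b + n - 1) / (n a + n - 1)` is increasing in `a` and `b` and equals `A` at `a = b = A`.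
lemma exists_pos_forall_lt_add {n : ℕ} (hn : 2 ≤ n) {A ε : ℝ} (hA : 1 ≤ A) (hε : 0 < ε) :
    ∃ η > 0, ∀ a b w : ℝ, A ≤ a → A ≤ b → w * (n * a + (n - 1)) = a * (n * b + (n - 1)) →
      w < A + η → a < A + ε ∧ b < A + ε := by
  have hn1 : (1 : ℝ) ≤ n - 1 := by
    have : (2 : ℝ) ≤ n := by exact_mod_cast hn
    linarith
  set K := n * ε + n * A + (n - 1)
  have hKpos : 0 < K := by nlinarith
  obtain ⟨η, hη, hηK⟩ : ∃ η > 0, η * K = (n - 1) * ε :=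
    ⟨(n - 1) * ε / K, div_pos (by nlinarith) hKpos, div_mul_cancel₀ _ hKpos.ne'⟩
  refine ⟨η, hη, fun a b w ha hb hw hwη => ?_⟩
  have hna : 0 ≤ n * a := by nlinarith
  have hgap : η * (n * a + (n - 1)) > (n - 1) * (a - A) + n * a * (b - A) := by
    nlinarith [mul_lt_mul_of_pos_right hwη (by nlinarith : (0 : ℝ) < n * a + (n - 1))]
  have hgapK : (n - 1) * ε * (n * a + (n - 1)) > ((n - 1) * (a - A) + n * a * (b - A)) * K := by
    rw [← hηK]; nlinarith
  constructor
  · by_contra! h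
    have : ε * (n * a + (n - 1)) > (a - A) * K := by nlinarith [mul_nonneg hna (sub_nonneg.2 hb)]
    nlinarith [mul_nonneg (by linarith : (0 : ℝ) ≤ a - A - ε)
      (by nlinarith : (0 : ℝ) ≤ n * A + (n - 1))]
  · by_contra! h
    have h1 : (n - 1) * ε * (n * a + (n - 1)) > n * a * ε * K := by
      nlinarith [mul_le_mul_of_nonneg_left (by linarith : ε ≤ b - A) hna,
        mul_nonneg (mul_nonneg (by linarith : (0 : ℝ) ≤ n - 1) (sub_nonneg.2 ha)) hKpos.le]
    have h2 : (n - 1) * (n * a + (n - 1)) > n * a * K := by nlinarith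
    nlinarith [mul_le_mul_of_nonneg_left (by nlinarith : 1 ≤ a * A)
      (by nlinarith : (0 : ℝ) ≤ n * n)]

namespace StrictMonoOn

lemma iterate {α : Type*} [Preorder α] {f : α → α} {s : Set α} (hf : StrictMonoOn f s)
    (hs : MapsTo f s s) (k : ℕ) : StrictMonoOn f^[k] s := by
  induction k with
  | zero => exact strictMono_id.strictMonoOn s
  | succ k ih => rw [iterate_succ]; exact ih.comp hf hs

end StrictMonoOn

section Orbit

variable {α : Type*} {g : α → α} {S : Set α} {u : α → ℝ} {n : ℕ}

lemma mul_pow_le_prod_orbit (hS : MapsTo g S S) {m : ℝ} (hm : 0 ≤ m) (hmu : ∀ s ∈ S, m ≤ u s)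
    (hn : n ≠ 0) {t : α} (ht : t ∈ S) : u t * m ^ (n - 1) ≤ ∏ i ∈ Finset.range n, u (g^[i] t) := by
  obtain ⟨k, rfl⟩ := Nat.exists_eq_succ_of_ne_zero hn
  rw [Finset.prod_range_succ', iterate_zero_apply, mul_comm, Nat.succ_sub_one]
  gcongr
  · exact hm.trans (hmu t ht)
  · calc m ^ k = ∏ _i ∈ Finset.range k, m := by simp
      _ ≤ _ := Finset.prod_le_prod (fun _ _ => hm) fun i _ => hmu _ (hS.iterate _ ht)

lemma one_le_of_prod_orbit_eq_sub (hn : 2 ≤ n) (hS : MapsTo g S S) (hpos : ∀ t ∈ S, 0 < u t)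
    (hprod : ∀ t ∈ S, ∏ i ∈ Finset.range n, u (g^[i] t) = n * u t - (n - 1)) :
    ∀ t ∈ S, 1 ≤ u t := by
  intro t ht
  have hbdd : BddBelow (u '' S) := ⟨0, forall_mem_image.2 fun s hs => (hpos s hs).le⟩
  set ρ := sInf (u '' S)
  have hρ : 0 ≤ ρ :=
    le_csInf ⟨_, mem_image_of_mem u ht⟩ (forall_mem_image.2 fun s hs => (hpos s hs).le)
  have hρu : ∀ s ∈ S, ρ ≤ u s := fun s hs => csInf_le hbdd (mem_image_of_mem u hs)
  have hn' : (2 : ℝ) ≤ n := by exact_mod_cast hn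
  have hbound : ∀ s ∈ S, n - 1 ≤ u s * (n - ρ ^ (n - 1)) := fun s hs => by
    have := mul_pow_le_prod_orbit (n := n) hS hρ hρu (by omega) hs
    rw [hprod s hs] at this
    linarith
  have hgap : 0 < n - ρ ^ (n - 1) := by
    by_contra! h
    nlinarith [hbound t ht, mul_nonpos_of_nonneg_of_nonpos (hpos t ht).le h]
  -- `ρ` is itself a lower bound: `ρ (n - ρⁿ⁻¹) ≥ n - 1`, which Bernoulli allows only for `ρ = 1`.
  have hρbound : (n - 1) / (n - ρ ^ (n - 1)) ≤ ρ :=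
    le_csInf ⟨_, mem_image_of_mem u ht⟩ <| forall_mem_image.2 fun s hs =>
      (div_le_iff₀ hgap).2 (hbound s hs)
  rw [div_le_iff₀ hgap] at hρbound
  have hpow : ρ ^ n = ρ * ρ ^ (n - 1) := by rw [← pow_succ', Nat.sub_add_cancel (by omega)]
  by_contra! h
  linarith [nat_mul_sub_lt_pow hn hρ (hρu t ht |>.trans_lt h).ne]

lemma le_one_of_sum_prod_eq {a : ℕ → ℝ} {m : ℕ} (hm : m ≠ 0) (ha : ∀ i, 1 ≤ a i)
    (hsum : ∑ k ∈ Finset.range m, ∏ i ∈ Finset.range (k + 1), a i = m) : a 0 ≤ 1 := by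
  have hle : ∀ k ∈ Finset.range m, a 0 ≤ ∏ i ∈ Finset.range (k + 1), a i := fun k _ => by
    rw [Finset.prod_range_succ']
    exact le_mul_of_one_le_left (zero_le_one.trans (ha 0)) (Finset.one_le_prod fun i _ => ha _)
  have := Finset.card_nsmul_le_sum _ _ _ hle
  rw [hsum, Finset.card_range, nsmul_eq_mul] at this
  have hm' : (0 : ℝ) < m := by exact_mod_cast Nat.pos_of_ne_zero hm
  nlinarith

lemma one_le_of_prod_orbit_eq_add (hn : 2 ≤ n) (hS : MapsTo g S S) (hpos : ∀ t ∈ S, 0 < u t)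
    (hinv : ∀ t ∈ S, u t < 1 → u (g t) < 1)
    (hprod : ∀ t ∈ S, ∏ i ∈ Finset.range n, u (g^[i] t) = n * u t + (n - 1)) :
    ∀ t ∈ S, 1 ≤ u t := by
  intro t ht
  by_contra! h
  have horbit : ∀ i, g^[i] t ∈ S ∧ u (g^[i] t) < 1 := fun i => by
    induction i with
    | zero => exact ⟨ht, h⟩
    | succ i ih => rw [iterate_succ_apply']; exact ⟨hS ih.1, hinv _ ih.1 ih.2⟩
  have hle : ∏ i ∈ Finset.range n, u (g^[i] t) ≤ 1 :=
    Finset.prod_le_one (fun i _ => (hpos _ (horbit i).1).le) fun i _ => (horbit i).2.le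
  have hn' : (2 : ℝ) ≤ n := by exact_mod_cast hn
  nlinarith [hprod t ht, hpos t ht]

lemma apply_iterate_mul_eq_of_prod_orbit_eq_add (hS : MapsTo g S S)
    (hprod : ∀ t ∈ S, ∏ i ∈ Finset.range n, u (g^[i] t) = n * u t + (n - 1)) {t : α}
    (ht : t ∈ S) : u (g^[n] t) * (n * u t + (n - 1)) = u t * (n * u (g t) + (n - 1)) := by
  have h := Finset.prod_range_succ (fun i => u (g^[i] t)) n
  rw [Finset.prod_range_succ'] at h
  simp only [iterate_succ_apply, iterate_zero_apply] at h
  rw [← hprod t ht, ← hprod (g t) (hS ht)]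
  linarith

-- Going back `n` steps along an orbit, the two-term relation above turns a value of `u` close to
-- its infimum into two consecutive ones, and so a window of `m + 1` into one of `m + 2`.
lemma exists_orbit_window_lt_sInf_add (hn : 2 ≤ n) (hS : MapsTo g S S) (hsurj : SurjOn g S S)
    (hu : ∀ t ∈ S, 1 ≤ u t)
    (hprod : ∀ t ∈ S, ∏ i ∈ Finset.range n, u (g^[i] t) = n * u t + (n - 1))
    (hne : S.Nonempty) (m : ℕ) :
    ∀ ε > 0, ∃ t ∈ S, ∀ r ≤ m, u (g^[r] t) < sInf (u '' S) + ε := by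
  have hbdd : BddBelow (u '' S) := ⟨1, forall_mem_image.2 hu⟩
  have hAu : ∀ s ∈ S, sInf (u '' S) ≤ u s := fun s hs => csInf_le hbdd (mem_image_of_mem u hs)
  have hA : 1 ≤ sInf (u '' S) := le_csInf (hne.image u) (forall_mem_image.2 hu)
  induction m with
  | zero =>
    intro ε hε
    obtain ⟨_, ⟨t, ht, rfl⟩, hlt⟩ := exists_lt_of_csInf_lt (hne.image u) (lt_add_of_pos_right _ hε)
    exact ⟨t, ht, fun r hr => by rwa [Nat.le_zero.1 hr]⟩
  | succ m ih =>
    intro ε hε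
    obtain ⟨η, hη, hstep⟩ := exists_pos_forall_lt_add hn hA hε
    obtain ⟨s, hs, hwin⟩ := ih η hη
    obtain ⟨t, ht, rfl⟩ := hsurj.iterate n hs
    have hpair : ∀ r ≤ m,
        u (g^[r] t) < sInf (u '' S) + ε ∧ u (g^[r + 1] t) < sInf (u '' S) + ε := fun r hr => by
      have htr := hS.iterate r ht
      rw [iterate_succ_apply']
      refine hstep _ _ _ (hAu _ htr) (hAu _ (hS htr))
        (apply_iterate_mul_eq_of_prod_orbit_eq_add hS hprod htr) ?_
      rw [← iterate_add_apply, add_comm, iterate_add_apply]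
      exact hwin r hr
    refine ⟨t, ht, fun r hr => ?_⟩
    rcases Nat.lt_or_ge r (m + 1) with h | h
    · exact (hpair r (by omega)).1
    · obtain rfl : r = m + 1 := by omega
      exact (hpair m le_rfl).2

lemma nat_mul_sInf_add_le_sInf_pow (hn : 2 ≤ n) (hS : MapsTo g S S) (hsurj : SurjOn g S S)
    (hu : ∀ t ∈ S, 1 ≤ u t)
    (hprod : ∀ t ∈ S, ∏ i ∈ Finset.range n, u (g^[i] t) = n * u t + (n - 1))
    (hne : S.Nonempty) : n * sInf (u '' S) + (n - 1) ≤ sInf (u '' S) ^ n := by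
  set A := sInf (u '' S)
  have hA : 1 ≤ A := le_csInf (hne.image u) (forall_mem_image.2 hu)
  have hbound : ∀ ε > 0, n * A + (n - 1) ≤ (A + ε) ^ n := fun ε hε => by
    obtain ⟨t, ht, hwin⟩ := exists_orbit_window_lt_sInf_add hn hS hsurj hu hprod hne (n - 1) ε hε
    calc n * A + (n - 1) ≤ n * u t + (n - 1) := by
          gcongr; exact csInf_le ⟨1, forall_mem_image.2 hu⟩ (mem_image_of_mem u ht)
      _ = ∏ i ∈ Finset.range n, u (g^[i] t) := (hprod t ht).symm
      _ ≤ ∏ _i ∈ Finset.range n, (A + ε) :=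
          Finset.prod_le_prod (fun i _ => zero_le_one.trans (hu _ (hS.iterate i ht)))
            fun i hi => (hwin i (by have := Finset.mem_range.1 hi; omega)).le
      _ = (A + ε) ^ n := by simp
  have hlim : Tendsto (fun ε => (A + ε) ^ n) (𝓝[>] 0) (𝓝 (A ^ n)) := by
    have : Continuous fun ε : ℝ => (A + ε) ^ n := by fun_prop
    simpa using (this.tendsto 0).mono_left nhdsWithin_le_nhds
  exact ge_of_tendsto hlim (eventually_nhdsWithin_of_forall hbound)

lemma eq_of_prod_orbit_eq_add (hn : 2 ≤ n) (hS : MapsTo g S S) (hsurj : SurjOn g S S)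
    (hu : ∀ t ∈ S, 1 ≤ u t)
    (hprod : ∀ t ∈ S, ∏ i ∈ Finset.range n, u (g^[i] t) = n * u t + (n - 1))
    {c : ℝ} (hc : 0 < c) (hcn : c ^ n = n * c + (n - 1)) : ∀ t ∈ S, u t = c := by
  intro t ht
  have hbdd : BddBelow (u '' S) := ⟨1, forall_mem_image.2 hu⟩
  set A := sInf (u '' S)
  have hAu : ∀ s ∈ S, A ≤ u s := fun s hs => csInf_le hbdd (mem_image_of_mem u hs)
  have hA : 1 ≤ A := le_csInf ⟨_, mem_image_of_mem u ht⟩ (forall_mem_image.2 hu)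
  have hApow := nat_mul_sInf_add_le_sInf_pow hn hS hsurj hu hprod ⟨t, ht⟩
  have hpow : A ^ n = A * A ^ (n - 1) := by rw [← pow_succ', Nat.sub_add_cancel (by omega)]
  have hn' : (2 : ℝ) ≤ n := by exact_mod_cast hn
  have huA : ∀ s ∈ S, u s ≤ A := fun s hs => by
    have := mul_pow_le_prod_orbit (n := n) hS (by linarith) hAu (by omega) hs
    rw [hprod s hs] at this
    nlinarith [mul_le_mul_of_nonneg_left this (by linarith : (0 : ℝ) ≤ A), hAu s hs]
  have htA : u t = A := le_antisymm (huA t ht) (hAu t ht)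
  have hAn : A ^ n = n * A + (n - 1) := by
    have := mul_pow_le_prod_orbit (n := n) hS (by linarith) hAu (by omega) ht
    rw [hprod t ht, htA] at this
    nlinarith
  rw [htA]
  exact eq_of_pow_eq_nat_mul_add hn (by linarith) hc hAn hcn

end Orbit

section Displacement

variable {g : ℝ → ℝ} {I S : Set ℝ} {n : ℕ}

-- Junk value `0` at the fixed points of `g`.
noncomputable def displacementRatio (g : ℝ → ℝ) (t : ℝ) : ℝ := (g (g t) - g t) / (g t - t)

lemma displacementRatio_mul_sub {t : ℝ} (ht : g t ≠ t) :
    displacementRatio g t * (g t - t) = g (g t) - g t :=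
  div_mul_cancel₀ _ (sub_ne_zero.2 ht)

lemma mapsTo_diff_fixedPoints (hg : MapsTo g I I) (hinj : InjOn g I) :
    MapsTo g (I \ fixedPoints g) (I \ fixedPoints g) :=
  fun _ ⟨ht, hfix⟩ => ⟨hg ht, fun h => hfix (hinj (hg ht) ht h)⟩

lemma iterate_succ_sub_iterate_eq_prod (hS : MapsTo g S S) (hfix : ∀ t ∈ S, g t ≠ t) {t : ℝ}
    (ht : t ∈ S) (k : ℕ) :
    g^[k + 1] t - g^[k] t = (∏ i ∈ Finset.range k, displacementRatio g (g^[i] t)) * (g t - t) := by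
  induction k with
  | zero => simp
  | succ k ih =>
    have h := displacementRatio_mul_sub (hfix _ (hS.iterate k ht))
    rw [Finset.prod_range_succ, mul_right_comm, ← ih]
    simp only [iterate_succ_apply'] at h ⊢
    rw [← h, mul_comm]

lemma prod_displacementRatio_orbit (hS : MapsTo g S S) (hfix : ∀ t ∈ S, g t ≠ t) (hSI : S ⊆ I)
    (heq : ∀ x ∈ I, g^[n] x = (n : ℝ) * g x - ((n : ℝ) - 1) * x) {t : ℝ} (ht : t ∈ S) :
    ∏ i ∈ Finset.range n, displacementRatio g (g^[i] t) = n * displacementRatio g t - (n - 1) := by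
  apply mul_right_cancel₀ (sub_ne_zero.2 (hfix t ht))
  rw [← iterate_succ_sub_iterate_eq_prod hS hfix ht, iterate_succ_apply, heq _ (hSI (hS ht)),
    heq _ (hSI ht)]
  linear_combination -(n : ℝ) * displacementRatio_mul_sub (hfix t ht)

-- Telescoping `gⁿ t - g t = (n - 1) (g t - t)`.
lemma sum_prod_displacementRatio_orbit (hn : 1 ≤ n) (hS : MapsTo g S S)
    (hfix : ∀ t ∈ S, g t ≠ t) (hSI : S ⊆ I)
    (heq : ∀ x ∈ I, g^[n] x = (n : ℝ) * g x - ((n : ℝ) - 1) * x) {t : ℝ} (ht : t ∈ S) :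
    ∑ k ∈ Finset.range (n - 1), ∏ i ∈ Finset.range (k + 1), displacementRatio g (g^[i] t) =
      ((n - 1 : ℕ) : ℝ) := by
  apply mul_right_cancel₀ (sub_ne_zero.2 (hfix t ht))
  rw [Finset.sum_mul]
  simp_rw [← iterate_succ_sub_iterate_eq_prod hS hfix ht]
  rw [Finset.sum_range_sub (fun k => g^[k + 1] t), Nat.sub_add_cancel hn, heq t (hSI ht),
    Nat.cast_pred hn]
  simp only [zero_add, iterate_one]
  ring

end Displacement

section Monotone

variable {g : ℝ → ℝ} {I : Set ℝ} {n : ℕ}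

lemma displacementRatio_pos (hg : MapsTo g I I) (hmono : StrictMonoOn g I) {t : ℝ} (ht : t ∈ I)
    (hfix : g t ≠ t) : 0 < displacementRatio g t := by
  rcases hfix.lt_or_gt with h | h
  · exact div_pos_of_neg_of_neg (sub_neg.2 (hmono (hg ht) ht h)) (sub_neg.2 h)
  · exact div_pos (sub_pos.2 (hmono ht (hg ht) h)) (sub_pos.2 h)

theorem iterate_two_sub_eq_of_strictMonoOn (hn : 2 ≤ n) (hg : MapsTo g I I)
    (hmono : StrictMonoOn g I) (heq : ∀ x ∈ I, g^[n] x = (n : ℝ) * g x - ((n : ℝ) - 1) * x) :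
    ∀ x ∈ I, g (g x) - g x = g x - x := by
  intro x hx
  by_cases hfix : g x = x
  · rw [hfix, hfix]
  have hS := mapsTo_diff_fixedPoints hg hmono.injOn
  have hfixS : ∀ t ∈ I \ fixedPoints g, g t ≠ t := fun t ht => ht.2
  have hge : ∀ t ∈ I \ fixedPoints g, 1 ≤ displacementRatio g t :=
    one_le_of_prod_orbit_eq_sub hn hS (fun t ht => displacementRatio_pos hg hmono ht.1 ht.2)
      fun t ht => prod_displacementRatio_orbit hS hfixS sdiff_subset heq ht
  have hle : displacementRatio g x ≤ 1 :=
    le_one_of_sum_prod_eq (a := fun i => displacementRatio g (g^[i] x)) (by omega)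
      (fun i => hge _ (hS.iterate i ⟨hx, hfix⟩))
      (sum_prod_displacementRatio_orbit (by omega) hS hfixS sdiff_subset heq ⟨hx, hfix⟩)
  rw [← displacementRatio_mul_sub hfix, le_antisymm hle (hge x ⟨hx, hfix⟩), one_mul]

end Monotone

section Antitone

variable {g : ℝ → ℝ} {I : Set ℝ} {n : ℕ}

lemma odd_of_strictAntiOn (hn : n ≠ 0) (hne : ∃ a ∈ I, ∃ b ∈ I, a ≠ b) (hg : MapsTo g I I)
    (hanti : StrictAntiOn g I) (heq : ∀ x ∈ I, g^[n] x = (n : ℝ) * g x - ((n : ℝ) - 1) * x) :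
    Odd n := by
  by_contra hodd
  obtain ⟨k, rfl⟩ := Nat.not_odd_iff_even.1 hodd
  have hmono : StrictMonoOn g^[k + k] I := by
    rw [← two_mul, iterate_mul]
    exact (hanti.comp hanti hg).iterate (hg.comp hg) k
  obtain ⟨a, ha, b, hb, hab⟩ := hne
  wlog hlt : a < b generalizing a b
  · exact this b hb a ha hab.symm (hab.symm.lt_of_le (not_lt.1 hlt))
  have h1 := hmono ha hb hlt
  have h2 := hanti ha hb hlt
  rw [heq a ha, heq b hb] at h1
  have hk : (1 : ℝ) ≤ ((k + k : ℕ) : ℝ) := by exact_mod_cast Nat.one_le_iff_ne_zero.2 hn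
  nlinarith

lemma displacementRatio_neg (hg : MapsTo g I I) (hanti : StrictAntiOn g I) {t : ℝ} (ht : t ∈ I)
    (hfix : g t ≠ t) : displacementRatio g t < 0 := by
  rcases hfix.lt_or_gt with h | h
  · exact div_neg_of_pos_of_neg (sub_pos.2 (hanti (hg ht) ht h)) (sub_neg.2 h)
  · exact div_neg_of_neg_of_pos (sub_neg.2 (hanti ht (hg ht) h)) (sub_pos.2 h)

-- `-1 < ρ(t) < 0` says that `g² t` lies strictly between `t` and `g t`, and applying `g`
-- preserves this.
lemma neg_one_lt_displacementRatio_apply (hg : MapsTo g I I) (hanti : StrictAntiOn g I) {t : ℝ}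
    (ht : t ∈ I) (hfix : g t ≠ t) (h : -1 < displacementRatio g t) :
    -1 < displacementRatio g (g t) := by
  have hgt := hg ht
  unfold displacementRatio at h ⊢
  rcases hfix.lt_or_gt with h' | h'
  · have hG : g t < g (g t) := hanti hgt ht h'
    rw [lt_div_iff_of_neg (sub_neg.2 h')] at h
    have : g t < g (g (g t)) := hanti (hg hgt) ht (by linarith)
    rw [lt_div_iff₀ (sub_pos.2 hG)]
    linarith
  · have hG : g (g t) < g t := hanti ht hgt h'
    rw [lt_div_iff₀ (sub_pos.2 h')] at h
    have : g (g (g t)) < g t := hanti ht (hg hgt) (by linarith)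
    rw [lt_div_iff_of_neg (sub_neg.2 hG)]
    linarith

lemma mem_uIcc_of_displacementRatio_le {t : ℝ} (hfix : g t ≠ t)
    (h : displacementRatio g t ≤ -1) : t ∈ uIcc (g (g t)) (g t) := by
  have hr := displacementRatio_mul_sub hfix
  rw [mem_uIcc]
  rcases hfix.lt_or_gt with h' | h'
  · right; constructor <;> nlinarith
  · left; constructor <;> nlinarith

lemma surjOn_of_displacementRatio_le (hI : I.OrdConnected) (hg : MapsTo g I I)
    (hgc : ContinuousOn g I) (hS : MapsTo g (I \ fixedPoints g) (I \ fixedPoints g))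
    (hr : ∀ t ∈ I \ fixedPoints g, displacementRatio g t ≤ -1) :
    SurjOn g (I \ fixedPoints g) (I \ fixedPoints g) := by
  intro s hs
  have h1 := mem_uIcc_of_displacementRatio_le hs.2 (hr s hs)
  have h2 := mem_uIcc_of_displacementRatio_le (hS hs).2 (hr _ (hS hs))
  have hs' : g s ≠ s := hs.2
  have hmem : s ∈ uIcc (g (g s)) (g (g (g s))) := by
    rw [mem_uIcc] at h1 h2 ⊢
    rcases h1 with h1 | h1 <;> rcases h2 with h2 | h2
    all_goals first
      | (left; constructor <;> linarith)
      | (right; constructor <;> linarith)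
  have hsub : uIcc s (g s) ⊆ I := hI.uIcc_subset hs.1 (hg hs.1)
  obtain ⟨ξ, hξ, hGξ⟩ :=
    intermediate_value_uIcc ((hgc.comp hgc hg).mono hsub) hmem
  refine ⟨g ξ, ⟨hg (hsub hξ), fun hfix => hs' ?_⟩, hGξ⟩
  have : g ξ = s := hfix.symm.trans hGξ
  rw [← this, hfix.eq]

theorem iterate_two_sub_eq_of_strictAntiOn (hn : 2 ≤ n) (hI : I.OrdConnected) (hg : MapsTo g I I)
    (hgc : ContinuousOn g I) (hanti : StrictAntiOn g I) (hodd : Odd n)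
    (heq : ∀ x ∈ I, g^[n] x = (n : ℝ) * g x - ((n : ℝ) - 1) * x) {c : ℝ} (hc : 0 < c)
    (hcn : c ^ n = n * c + (n - 1)) : ∀ x ∈ I, g (g x) - g x = -c * (g x - x) := by
  intro x hx
  by_cases hfix : g x = x
  · rw [hfix, hfix]; ring
  have hS := mapsTo_diff_fixedPoints hg hanti.injOn
  have hfixS : ∀ t ∈ I \ fixedPoints g, g t ≠ t := fun t ht => ht.2
  set u := fun t => -displacementRatio g t
  have hprod : ∀ t ∈ I \ fixedPoints g, ∏ i ∈ Finset.range n, u (g^[i] t) = n * u t + (n - 1) :=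
    fun t ht => by
      simp only [u, Finset.prod_neg, Finset.card_range, hodd.neg_one_pow,
        prod_displacementRatio_orbit hS hfixS sdiff_subset heq ht]
      ring
  have hu : ∀ t ∈ I \ fixedPoints g, 1 ≤ u t :=
    one_le_of_prod_orbit_eq_add hn hS
      (fun t ht => neg_pos.2 (displacementRatio_neg hg hanti ht.1 ht.2))
      (fun t ht h => neg_lt.1 (neg_one_lt_displacementRatio_apply hg hanti ht.1 ht.2 (neg_lt.2 h)))
      hprod
  have hsurj := surjOn_of_displacementRatio_le hI hg hgc hS fun t ht => le_neg.1 (hu t ht)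
  have hux := eq_of_prod_orbit_eq_add hn hS hsurj hu hprod hc hcn x ⟨hx, hfix⟩
  rw [← displacementRatio_mul_sub hfix, ← hux]
  ring

end Antitone

/-- A continuous solution `g : I → I` of `g^n(x) = n·g(x) − (n−1)·x` (`n ≥ 3`) satisfies
`g²(x) − 2g(x) + x = 0` if it is increasing; if it is decreasing, then `n` is odd and
`g` satisfies `g²(x) − (r₀+1)·g(x) + r₀·x = 0`, where `r₀` is the unique negative real
root of `r^n − n·r + n − 1`. -/
theorem boros_order_reduction
    (n : ℕ) (hn : 3 ≤ n)
    (I : Set ℝ) (hI : I.OrdConnected) (hne : ∃ a ∈ I, ∃ b ∈ I, a ≠ b)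
    (g : ℝ → ℝ) (hg : Set.MapsTo g I I) (hgc : ContinuousOn g I)
    (heq : ∀ x ∈ I, g^[n] x = (n : ℝ) * g x - ((n : ℝ) - 1) * x) :
    (StrictMonoOn g I → ∀ x ∈ I, g^[2] x - 2 * g x + x = 0) ∧
    (StrictAntiOn g I → Odd n ∧
      ∀ r₀ : ℝ, r₀ < 0 → r₀ ^ n - (n : ℝ) * r₀ + (n : ℝ) - 1 = 0 →
        ∀ x ∈ I, g^[2] x - (r₀ + 1) * g x + r₀ * x = 0) := by
  have hn2 : 2 ≤ n := by omega
  refine ⟨fun hmono x hx => ?_, fun hanti => ?_⟩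
  · have := iterate_two_sub_eq_of_strictMonoOn hn2 hg hmono heq x hx
    change g (g x) - 2 * g x + x = 0
    linarith
  · have hodd := odd_of_strictAntiOn (by omega) hne hg hanti heq
    refine ⟨hodd, fun r₀ hr₀ hroot x hx => ?_⟩
    have hc : (-r₀) ^ n = n * -r₀ + (n - 1) := by rw [hodd.neg_pow]; linarith
    have := iterate_two_sub_eq_of_strictAntiOn hn2 hI hg hgc hanti hodd heq (neg_pos.2 hr₀) hc x hx
    change g (g x) - (r₀ + 1) * g x + r₀ * x = 0
    linarith
end
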